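/- arXiv:2010.09835 — 3 statements merged into one kernel-verified Lean document; each statement's English description precedes it below -/
import Mathlib

section
/- Let r ≥ 2, c ≥ 5, q ≥ 1, and g₁,…,g_{c−1} reals with 0 ≤ gᵢ ≤ r, Γ = max gᵢ, γ = min gᵢ. If Σᵢ gᵢ ≥ q(r + Γ − γ)·(c−1)/(c−2), then Σ_{k=0}^{q} M(g₁,…,g_{c−1}; k) ≤ Σ_{k=0}^{q} C(c−1,k) (S/(c−1))^k (r − S/(c−1))^{c−1−k}, where S = Σᵢ gᵢ. -/
set_option linter.unusedSectionVars false

open Finset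

noncomputable def Msum {s : ℕ} (r : ℝ) (g : Fin s → ℝ) (k : ℕ) : ℝ :=
  ∑ h ∈ univ.filter (fun h : Fin s → Bool =>
      (∀ i, g i = r → h i = true) ∧ (∀ i, g i = 0 → h i = false) ∧
      (univ.filter (fun i => h i = true)).card = k),
    ∏ i, (if h i then g i else r - g i)

namespace Smooth

variable {ι : Type*} [Fintype ι] [DecidableEq ι]

/-- weight of a subset `A` of ground set `C`. -/
noncomputable def W (r : ℝ) (g : ι → ℝ) (C A : Finset ι) : ℝ :=
  (∏ i ∈ A, g i) * ∏ i ∈ C \ A, (r - g i)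

lemma W_nonneg {r : ℝ} {g : ι → ℝ} {C : Finset ι} (hg : ∀ i ∈ C, 0 ≤ g i ∧ g i ≤ r)
    {A : Finset ι} (hA : A ⊆ C) : 0 ≤ W r g C A := by
  apply mul_nonneg
  · exact prod_nonneg fun i hi => (hg i (hA hi)).1
  · exact prod_nonneg fun i hi => by
      have := (hg i (sdiff_subset hi)).2; linarith

lemma W_congr {r : ℝ} {g g' : ι → ℝ} {C : Finset ι} (h : ∀ i ∈ C, g i = g' i)
    {A : Finset ι} (hA : A ⊆ C) : W r g C A = W r g' C A := by
  unfold W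
  rw [prod_congr rfl fun i hi => h i (hA hi)]
  congr 1
  exact prod_congr rfl fun i hi => by rw [h i (sdiff_subset hi)]

lemma Msum_eq {s : ℕ} (r : ℝ) (g : Fin s → ℝ) (k : ℕ) :
    Msum r g k = ∑ A ∈ powersetCard k univ, W r g univ A := by
  classical
  unfold Msum
  have hsub : univ.filter (fun h : Fin s → Bool =>
      (∀ i, g i = r → h i = true) ∧ (∀ i, g i = 0 → h i = false) ∧
      (univ.filter (fun i => h i = true)).card = k) ⊆
      univ.filter (fun h : Fin s → Bool => (univ.filter (fun i => h i = true)).card = k) := by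
    intro h hh
    rw [mem_filter] at hh ⊢
    exact ⟨hh.1, hh.2.2.2⟩
  rw [Finset.sum_subset hsub ?van]
  case van =>
    intro h hmem hnot
    simp only [mem_filter, mem_univ, true_and] at hmem hnot
    rw [not_and_or, not_and_or] at hnot
    have : (¬ ∀ i, g i = r → h i = true) ∨ (¬ ∀ i, g i = 0 → h i = false) := by
      rcases hnot with h1 | h2
      · exact Or.inl h1
      rcases h2 with h2 | h3
      · exact Or.inr h2
      · exact absurd hmem h3
    rcases this with h1 | h2
    · push_neg at h1
      obtain ⟨i, hir, hib⟩ := h1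
      apply Finset.prod_eq_zero (mem_univ i)
      rw [if_neg hib, hir]
      ring
    · push_neg at h2
      obtain ⟨i, hi0, hib⟩ := h2
      apply Finset.prod_eq_zero (mem_univ i)
      rw [if_pos (by simpa using hib), hi0]
  · apply Finset.sum_nbij' (i := fun h : Fin s → Bool => univ.filter (fun i => h i = true))
      (j := fun A : Finset (Fin s) => fun i => decide (i ∈ A))
    · intro h hh
      simp only [mem_filter, mem_univ, true_and] at hh
      simp [Finset.mem_powersetCard, hh]
    · intro A hA
      simp only [Finset.mem_powersetCard] at hA
      simp only [mem_filter, mem_univ, true_and]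
      rw [← hA.2]
      congr 1
      ext i
      simp
    · intro h _
      funext i
      simp
    · intro A _
      ext i
      simp
    · intro h _
      rw [Finset.prod_ite (fun i => g i) (fun i => r - g i), Finset.filter_not]
      rfl


lemma split_one (r : ℝ) (g : ι → ℝ) {C : Finset ι} {i : ι} (hi : i ∈ C)
    (p : ℕ → Prop) [DecidablePred p] :
    ∑ A ∈ C.powerset.filter (fun A => p A.card), W r g C A
      = (r - g i) * ∑ A ∈ (C.erase i).powerset.filter (fun A => p A.card), W r g (C.erase i) A
      + g i * ∑ A ∈ (C.erase i).powerset.filter (fun A => p (A.card + 1)), W r g (C.erase i) A := by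
  classical
  have hsplit := Finset.sum_filter_add_sum_filter_not
    (C.powerset.filter (fun A => p A.card)) (fun A => i ∈ A) (W r g C)
  rw [← hsplit]
  have hin : ∑ A ∈ (C.powerset.filter (fun A => p A.card)).filter (fun A => i ∈ A), W r g C A
      = g i * ∑ A ∈ (C.erase i).powerset.filter (fun A => p (A.card + 1)), W r g (C.erase i) A := by
    rw [Finset.mul_sum]
    apply Finset.sum_nbij' (i := fun A => A.erase i) (j := fun A => insert i A)
    · intro A hA
      simp only [mem_filter, mem_powerset] at hA ⊢
      obtain ⟨⟨hAC, hp⟩, hiA⟩ := hA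
      refine ⟨Finset.erase_subset_erase _ hAC, ?_⟩
      rwa [Finset.card_erase_add_one hiA]
    · intro A hA
      simp only [mem_filter, mem_powerset] at hA ⊢
      obtain ⟨hAC, hp⟩ := hA
      have hiA : i ∉ A := fun h => (Finset.notMem_erase i C) (hAC h)
      refine ⟨⟨?_, ?_⟩, Finset.mem_insert_self i A⟩
      · intro x hx
        rcases Finset.mem_insert.1 hx with rfl | hx
        · exact hi
        · exact Finset.erase_subset _ _ (hAC hx)
      · rwa [Finset.card_insert_of_notMem hiA]
    · intro A hA
      simp only [mem_filter] at hA
      exact Finset.insert_erase hA.2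
    · intro A hA
      simp only [mem_filter, mem_powerset] at hA
      exact Finset.erase_insert (fun h => (Finset.notMem_erase i C) (hA.1 h))
    · intro A hA
      simp only [mem_filter, mem_powerset] at hA
      obtain ⟨⟨hAC, hp⟩, hiA⟩ := hA
      unfold W
      have h1 : ∏ l ∈ A, g l = g i * ∏ l ∈ A.erase i, g l :=
        (Finset.mul_prod_erase A g hiA).symm
      have h2 : C \ A = (C.erase i) \ (A.erase i) := by
        ext x
        simp only [Finset.mem_sdiff, Finset.mem_erase]
        constructor
        · rintro ⟨hxC, hxA⟩
          exact ⟨⟨fun h => hxA (h ▸ hiA), hxC⟩, fun h => hxA h.2⟩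
        · rintro ⟨⟨hxi, hxC⟩, hx⟩
          exact ⟨hxC, fun h => hx ⟨hxi, h⟩⟩
      rw [h1, h2]
      ring
  have hnot : ∑ A ∈ (C.powerset.filter (fun A => p A.card)).filter (fun A => ¬ i ∈ A), W r g C A
      = (r - g i) * ∑ A ∈ (C.erase i).powerset.filter (fun A => p A.card), W r g (C.erase i) A := by
    rw [Finset.mul_sum]
    have hset : (C.powerset.filter (fun A => p A.card)).filter (fun A => ¬ i ∈ A)
        = (C.erase i).powerset.filter (fun A => p A.card) := by
      ext A
      simp only [mem_filter, mem_powerset, Finset.subset_erase]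
      tauto
    rw [hset]
    apply Finset.sum_congr rfl
    intro A hA
    simp only [mem_filter, mem_powerset, Finset.subset_erase] at hA
    obtain ⟨⟨hAC, hiA⟩, hp⟩ := hA
    unfold W
    have h2 : C \ A = insert i ((C.erase i) \ A) := by
      ext x
      simp only [Finset.mem_sdiff, Finset.mem_insert, Finset.mem_erase]
      constructor
      · rintro ⟨hxC, hxA⟩
        by_cases hx : x = i
        · exact Or.inl hx
        · exact Or.inr ⟨⟨hx, hxC⟩, hxA⟩
      · rintro (rfl | ⟨⟨hxi, hxC⟩, hxA⟩)
        · exact ⟨hi, hiA⟩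
        · exact ⟨hxC, hxA⟩
    have h3 : i ∉ (C.erase i) \ A := fun h => (Finset.notMem_erase i C) (Finset.mem_sdiff.1 h).1
    rw [h2, Finset.prod_insert h3]
    ring
  rw [hin, hnot]
  ring

lemma sum_range_eq (r : ℝ) (g : ι → ℝ) (C : Finset ι) (q : ℕ) :
    ∑ k ∈ Finset.range (q+1), ∑ A ∈ powersetCard k C, W r g C A
      = ∑ A ∈ C.powerset.filter (fun A => A.card ≤ q), W r g C A := by
  classical
  have h := Finset.sum_fiberwise_of_maps_to (s := C.powerset.filter (fun A => A.card ≤ q))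
    (t := Finset.range (q+1)) (g := fun A => A.card)
    (by intro A hA; simp only [mem_filter] at hA; simp only [mem_range]; omega) (W r g C)
  rw [← h]
  apply Finset.sum_congr rfl
  intro k hk
  simp only [mem_range] at hk
  apply Finset.sum_congr ?_ (fun _ _ => rfl)
  rw [Finset.filter_filter, Finset.powersetCard_eq_filter]
  ext A
  simp only [mem_filter, mem_powerset]
  constructor
  · rintro ⟨h1, h3⟩
    exact ⟨h1, by omega, h3⟩
  · rintro ⟨h1, _, h3⟩
    exact ⟨h1, h3⟩

lemma double_count (r : ℝ) (g : ι → ℝ) (R : Finset ι) (q : ℕ) :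
    ∑ A ∈ R.powerset.filter (fun A => A.card + 1 = q), ∑ l ∈ R \ A, W r g R (insert l A)
      = ∑ B ∈ R.powerset.filter (fun B => B.card = q), (q : ℝ) * W r g R B := by
  classical
  have hR : ∀ B ∈ R.powerset.filter (fun B => B.card = q),
      (q : ℝ) * W r g R B = ∑ _l ∈ B, W r g R B := by
    intro B hB
    simp only [mem_filter] at hB
    rw [Finset.sum_const, hB.2, nsmul_eq_mul]
  rw [Finset.sum_congr rfl hR, Finset.sum_sigma', Finset.sum_sigma']
  apply Finset.sum_nbij' (i := fun x => (⟨insert x.2 x.1, x.2⟩ : Σ _ : Finset ι, ι))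
    (j := fun x => (⟨x.1.erase x.2, x.2⟩ : Σ _ : Finset ι, ι))
  · rintro ⟨A, l⟩ hm
    simp only [mem_sigma, mem_filter, mem_powerset, mem_sdiff] at hm ⊢
    obtain ⟨⟨hAR, hc⟩, hlR, hlA⟩ := hm
    refine ⟨⟨Finset.insert_subset hlR hAR, ?_⟩, Finset.mem_insert_self _ _⟩
    rw [Finset.card_insert_of_notMem hlA]; exact hc
  · rintro ⟨B, l⟩ hm
    simp only [mem_sigma, mem_filter, mem_powerset, mem_sdiff] at hm ⊢
    obtain ⟨⟨hBR, hc⟩, hlB⟩ := hm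
    refine ⟨⟨(Finset.erase_subset _ _).trans hBR, ?_⟩, hBR hlB, Finset.notMem_erase _ _⟩
    rw [Finset.card_erase_add_one hlB]; exact hc
  · rintro ⟨A, l⟩ hm
    simp only [mem_sigma, mem_filter, mem_powerset, mem_sdiff] at hm
    simp [Finset.erase_insert hm.2.2]
  · rintro ⟨B, l⟩ hm
    simp only [mem_sigma, mem_filter, mem_powerset] at hm
    simp [Finset.insert_erase hm.2]
  · rintro ⟨A, l⟩ _
    rfl

lemma phi_mono {r γ t : ℝ} (hγ0 : 0 ≤ γ) (hγt : γ ≤ t) (htr : t < r) :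
    γ / (r - γ) ≤ t / (r - t) := by
  have h1 : 0 < r - t := by linarith
  have h2 : 0 < r - γ := by linarith
  rw [div_le_div_iff₀ h2 h1]
  nlinarith

lemma tangent {r t μ : ℝ} (hr : 0 < r) (ht0 : 0 ≤ t) (htr : t < r) (hμ0 : 0 ≤ μ)
    (hμr : μ < r) :
    μ / (r - μ) + r / ((r - μ)^2) * (t - μ) ≤ t / (r - t) := by
  have h1 : 0 < r - t := by linarith
  have h2 : 0 < r - μ := by linarith
  have key : μ / (r - μ) + r / ((r - μ)^2) * (t - μ)
      = (μ * (r - μ) + r * (t - μ)) / ((r - μ)^2) := by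
    field_simp
  rw [key, div_le_div_iff₀ (by positivity) h1]
  nlinarith [mul_nonneg hr.le (sq_nonneg (t - μ))]

lemma W_insert_eq {r : ℝ} {g : ι → ℝ} {R A : Finset ι} (hAR : A ⊆ R) {l : ι}
    (hl : l ∈ R \ A) :
    W r g R A * g l = (r - g l) * W r g R (insert l A) := by
  obtain ⟨hlR, hlA⟩ := Finset.mem_sdiff.1 hl
  unfold W
  have h1 : ∏ x ∈ insert l A, g x = g l * ∏ x ∈ A, g x :=
    Finset.prod_insert hlA
  have h2 : R \ insert l A = (R \ A).erase l := by
    ext x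
    simp only [Finset.mem_sdiff, Finset.mem_erase, Finset.mem_insert]
    tauto
  have h3 : ∏ x ∈ R \ A, (r - g x) = (r - g l) * ∏ x ∈ (R \ A).erase l, (r - g x) :=
    (Finset.mul_prod_erase _ _ hl).symm
  rw [h1, h2, h3]
  ring

lemma key_lemma (r γ Γ S : ℝ) (q sn : ℕ) (R : Finset ι) (g : ι → ℝ)
    (hr : 0 < r) (hγ0 : 0 ≤ γ) (hγΓ : γ ≤ Γ) (hΓr : Γ ≤ r)
    (hq1 : 1 ≤ q) (hqs : q + 2 ≤ sn)
    (hcard : R.card + 2 = sn)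
    (hg : ∀ l ∈ R, γ ≤ g l ∧ g l ≤ Γ)
    (hσ : S - Γ - S / sn ≤ ∑ l ∈ R, g l)
    (hS : (q:ℝ) * (r + Γ - γ) * ((sn : ℝ) / ((sn:ℝ) - 1)) ≤ S) :
    ∑ A ∈ R.powerset.filter (fun A => A.card + 1 = q), W r g R A
      ≤ ∑ A ∈ R.powerset.filter (fun A => A.card = q), W r g R A := by
  classical
  have hgr : ∀ l ∈ R, 0 ≤ g l ∧ g l ≤ r := fun l hl =>
    ⟨le_trans hγ0 (hg l hl).1, le_trans (hg l hl).2 hΓr⟩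
  have hq0 : (0:ℝ) < (q:ℝ) := by exact_mod_cast hq1
  rw [← mul_le_mul_iff_right₀ hq0, Finset.mul_sum, Finset.mul_sum]
  have hdc := double_count r g R q
  rw [← hdc]
  apply Finset.sum_le_sum
  intro A hA
  simp only [mem_filter, mem_powerset] at hA
  obtain ⟨hAR, hAcard⟩ := hA
  by_cases hw : W r g R A = 0
  · rw [hw, mul_zero]
    apply Finset.sum_nonneg
    intro l hl
    exact W_nonneg hgr (Finset.insert_subset (Finset.mem_sdiff.1 hl).1 hAR)
  · have hwpos : 0 < W r g R A := lt_of_le_of_ne (W_nonneg hgr hAR) (Ne.symm hw)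
    have hlr : ∀ l ∈ R \ A, g l < r := by
      intro l hl
      rcases lt_or_ge (g l) r with h | h
      · exact h
      · exfalso
        apply hw
        have hglr : r - g l = 0 := by
          have := (hgr l (Finset.mem_sdiff.1 hl).1).2; linarith
        unfold W
        rw [Finset.prod_eq_zero hl hglr, mul_zero]
    have hWins : ∀ l ∈ R \ A, W r g R (insert l A) = W r g R A * (g l / (r - g l)) := by
      intro l hl
      have hne : r - g l ≠ 0 := by have := hlr l hl; intro h; linarith
      have hid := W_insert_eq hAR hl (r := r) (g := g)
      field_simp
      linarith [hid]
    rw [Finset.sum_congr rfl hWins, ← Finset.mul_sum]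
    rw [mul_comm ((q:ℝ)) (W r g R A)]
    apply mul_le_mul_of_nonneg_left ?core hwpos.le
    -- core estimate : (q:ℝ) ≤ ∑ l ∈ R \ A, g l / (r - g l)
    case core =>
    have hABcard : (R \ A).card + q + 1 = sn := by
      rw [Finset.card_sdiff_of_subset hAR]
      have := Finset.card_le_card hAR
      omega
    have hBne : (R \ A).Nonempty := by
      rw [← Finset.card_pos]; omega
    obtain ⟨l₀, hl₀⟩ := hBne
    have hγr : γ < r := lt_of_le_of_lt (hg l₀ (Finset.mem_sdiff.1 hl₀).1).1 (hlr l₀ hl₀)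
    have hsn1 : (0:ℝ) < (sn:ℝ) - 1 := by
      have : (q:ℝ) + 2 ≤ (sn:ℝ) := by exact_mod_cast hqs
      linarith
    have hsn0 : (0:ℝ) < (sn:ℝ) := by linarith
    have hBcardR : ((R \ A).card : ℝ) = (sn:ℝ) - 1 - (q:ℝ) := by
      have : ((R \ A).card : ℝ) + (q:ℝ) + 1 = (sn:ℝ) := by exact_mod_cast hABcard
      linarith
    have hσB : S - S / sn - (q:ℝ) * Γ ≤ ∑ l ∈ R \ A, g l := by
      have h1 : ∑ l ∈ A, g l ≤ ((q:ℝ) - 1) * Γ := by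
        have := Finset.sum_le_card_nsmul A g Γ (fun l hl => (hg l (hAR hl)).2)
        rw [nsmul_eq_mul] at this
        have hc : ((A.card : ℝ)) = (q:ℝ) - 1 := by
          have : ((A.card:ℝ)) + 1 = (q:ℝ) := by exact_mod_cast hAcard
          linarith
        rw [hc] at this
        exact this
      have h2 : ∑ l ∈ R \ A, g l + ∑ l ∈ A, g l = ∑ l ∈ R, g l :=
        Finset.sum_sdiff hAR
      linarith
    by_cases hcase : (q:ℝ) * r ≤ ((sn:ℝ) - 1) * γ
    · -- pointwise bound by γ/(r-γ)
      have h1 : (q:ℝ) ≤ ((R \ A).card : ℝ) * (γ / (r - γ)) := by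
        rw [hBcardR, ← mul_div_assoc, le_div_iff₀ (by linarith : (0:ℝ) < r - γ)]
        nlinarith [hcase]
      calc (q:ℝ) ≤ ((R \ A).card : ℝ) * (γ / (r - γ)) := h1
        _ ≤ ∑ l ∈ R \ A, g l / (r - g l) := by
            have := Finset.card_nsmul_le_sum (R \ A) (fun l => g l / (r - g l)) (γ / (r - γ))
              (fun l hl => phi_mono hγ0 (hg l (Finset.mem_sdiff.1 hl).1).1 (hlr l hl))
            rwa [nsmul_eq_mul] at this
    · push_neg at hcase
      set σ := ∑ l ∈ R \ A, g l with hσdef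
      set n : ℝ := ((R \ A).card : ℝ) with hndef
      have hn0 : (0:ℝ) < n := by
        rw [hBcardR]
        have : (q:ℝ) + 2 ≤ (sn:ℝ) := by exact_mod_cast hqs
        linarith
      have hσ0 : 0 ≤ σ := Finset.sum_nonneg fun l hl => (hgr l (Finset.mem_sdiff.1 hl).1).1
      have hσlt : σ < n * r := by
        have := Finset.sum_lt_sum_of_nonempty ⟨l₀, hl₀⟩ (f := g) (g := fun _ => r)
          (fun l hl => hlr l hl)
        rw [Finset.sum_const, nsmul_eq_mul] at this
        rw [hndef, hσdef]
        exact this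
      clear_value n
      set μ : ℝ := σ / n with hμdef
      have hμ0 : 0 ≤ μ := div_nonneg hσ0 hn0.le
      have hμr : μ < r := by rw [hμdef, div_lt_iff₀ hn0]; linarith
      have hnμ : n * μ = σ := by rw [hμdef]; field_simp
      have hts : ∑ l ∈ R \ A, (μ / (r - μ) + r / ((r - μ)^2) * (g l - μ))
          ≤ ∑ l ∈ R \ A, g l / (r - g l) :=
        Finset.sum_le_sum fun l hl =>
          tangent hr (hgr l (Finset.mem_sdiff.1 hl).1).1 (hlr l hl) hμ0 hμr
      have hts2 : ∑ l ∈ R \ A, (μ / (r - μ) + r / ((r - μ)^2) * (g l - μ))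
          = σ / (r - μ) := by
        rw [Finset.sum_add_distrib, Finset.sum_const, nsmul_eq_mul, ← Finset.mul_sum]
        have h9 : ∑ l ∈ R \ A, (g l - μ) = σ - n * μ := by
          rw [Finset.sum_sub_distrib, Finset.sum_const, nsmul_eq_mul, ← hndef, ← hσdef]
        rw [← hndef, h9, hnμ, sub_self, mul_zero, add_zero, ← mul_div_assoc, hnμ]
      have harith : (q:ℝ) * r * ((sn:ℝ) - 1 - (q:ℝ)) ≤ ((sn:ℝ) - 1) * σ := by
        set u : ℝ := S / (sn:ℝ) with hudef
        clear_value u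
        have hSu : S = u * (sn:ℝ) := by rw [hudef]; field_simp
        have e0 : (q:ℝ) * (r + Γ - γ) * (sn:ℝ) ≤ S * ((sn:ℝ) - 1) := by
          rw [← mul_div_assoc] at hS
          exact (div_le_iff₀ hsn1).1 hS
        have e1 : (q:ℝ) * (r + Γ - γ) ≤ u * ((sn:ℝ) - 1) := by
          rw [hudef, div_mul_eq_mul_div, le_div_iff₀ hsn0]
          linarith [e0]
        have e2 : u * ((sn:ℝ) - 1) - (q:ℝ) * Γ ≤ σ := by
          linarith [hσB, hSu]
        clear hSu e0 hσB hS
        nlinarith [mul_le_mul_of_nonneg_left e1 hsn1.le,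
          mul_le_mul_of_nonneg_left e2 hsn1.le,
          mul_le_mul_of_nonneg_left hcase.le hq0.le]
      have hfin : (q:ℝ) ≤ σ / (r - μ) := by
        rw [le_div_iff₀ (by linarith : (0:ℝ) < r - μ)]
        have hn : n = (sn:ℝ) - 1 - (q:ℝ) := hBcardR
        have h1 : (q:ℝ) * (r - μ) * n ≤ σ * n := by
          have hexp : (q:ℝ) * (r - μ) * n = (q:ℝ) * r * n - (q:ℝ) * σ := by
            have h : (r - μ) * n = r * n - σ := by
              rw [hμdef]
              field_simp
            linear_combination (q:ℝ) * h
          rw [hexp, hn]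
          linarith [harith]

        exact le_of_mul_le_mul_right h1 hn0
      linarith [hts, hts2, hfin]

lemma decomp (r : ℝ) (g : ι → ℝ) {i j : ι} (hij : i ≠ j) (q : ℕ) :
    ∑ A ∈ univ.powerset.filter (fun A => A.card ≤ q), W r g univ A
      = (r - g i) * ((r - g j) * (∑ A ∈ ((univ.erase i).erase j).powerset.filter
            (fun A => A.card ≤ q), W r g ((univ.erase i).erase j) A)
          + g j * (∑ A ∈ ((univ.erase i).erase j).powerset.filter
            (fun A => A.card + 1 ≤ q), W r g ((univ.erase i).erase j) A))
      + g i * ((r - g j) * (∑ A ∈ ((univ.erase i).erase j).powerset.filter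
            (fun A => A.card + 1 ≤ q), W r g ((univ.erase i).erase j) A)
          + g j * (∑ A ∈ ((univ.erase i).erase j).powerset.filter
            (fun A => A.card + 1 + 1 ≤ q), W r g ((univ.erase i).erase j) A)) := by
  classical
  rw [split_one r g (Finset.mem_univ i) (fun k => k ≤ q)]
  have hj : j ∈ univ.erase i := Finset.mem_erase.2 ⟨hij.symm, Finset.mem_univ j⟩
  rw [split_one r g hj (fun k => k ≤ q), split_one r g hj (fun k => k + 1 ≤ q)]

lemma step_eq (r : ℝ) (g g' : ι → ℝ) {i j : ι} (hij : i ≠ j) (q : ℕ) (hq : 1 ≤ q)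
    (hoff : ∀ l, l ≠ i → l ≠ j → g' l = g l)
    (hsum2 : g' i + g' j = g i + g j) :
    ∑ A ∈ univ.powerset.filter (fun A => A.card ≤ q), W r g' univ A
      = ∑ A ∈ univ.powerset.filter (fun A => A.card ≤ q), W r g univ A
        + (g' i * g' j - g i * g j)
          * ((∑ A ∈ ((univ.erase i).erase j).powerset.filter
                (fun A => A.card = q), W r g ((univ.erase i).erase j) A)
            - (∑ A ∈ ((univ.erase i).erase j).powerset.filter
                (fun A => A.card + 1 = q), W r g ((univ.erase i).erase j) A)) := by
  classical
  set R := (univ.erase i).erase j with hR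
  have hmemR : ∀ l ∈ R, l ≠ i ∧ l ≠ j := by
    intro l hl
    rw [hR] at hl
    simp only [Finset.mem_erase] at hl
    exact ⟨hl.2.1, hl.1⟩
  have hWRg : ∀ (p : Finset ι → Prop) (hp : DecidablePred p),
      ∑ A ∈ R.powerset.filter p, W r g' R A = ∑ A ∈ R.powerset.filter p, W r g R A := by
    intro p hp
    apply Finset.sum_congr rfl
    intro A hA
    simp only [mem_filter, mem_powerset] at hA
    exact W_congr (fun l hl => (hoff l (hmemR l hl).1 (hmemR l hl).2)) hA.1
  rw [decomp r g hij q, decomp r g' hij q]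
  rw [hWRg _ _, hWRg _ _, hWRg _ _]
  set S0 := ∑ A ∈ R.powerset.filter (fun A => A.card ≤ q), W r g R A with hS0def
  set S1 := ∑ A ∈ R.powerset.filter (fun A => A.card + 1 ≤ q), W r g R A with hS1def
  set S2 := ∑ A ∈ R.powerset.filter (fun A => A.card + 1 + 1 ≤ q), W r g R A with hS2def
  set Pq := ∑ A ∈ R.powerset.filter (fun A => A.card = q), W r g R A with hPqdef
  set Pq' := ∑ A ∈ R.powerset.filter (fun A => A.card + 1 = q), W r g R A with hPq'def
  have hS0 : S0 = S1 + Pq := by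
    rw [hS0def, hS1def, hPqdef]
    rw [← Finset.sum_filter_add_sum_filter_not (R.powerset.filter (fun A => A.card ≤ q))
      (fun A => A.card + 1 ≤ q) (W r g R)]
    congr 1
    · congr 1
      rw [Finset.filter_filter]
      apply Finset.filter_congr
      intro A _
      constructor
      · intro h; omega
      · intro h; omega
    · congr 1
      rw [Finset.filter_filter]
      apply Finset.filter_congr
      intro A _
      constructor
      · intro h; omega
      · intro h; omega
  have hS1 : S1 = S2 + Pq' := by
    rw [hS1def, hS2def, hPq'def]
    rw [← Finset.sum_filter_add_sum_filter_not (R.powerset.filter (fun A => A.card + 1 ≤ q))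
      (fun A => A.card + 1 + 1 ≤ q) (W r g R)]
    congr 1
    · congr 1
      rw [Finset.filter_filter]
      apply Finset.filter_congr
      intro A _
      constructor
      · intro h; omega
      · intro h; omega
    · congr 1
      rw [Finset.filter_filter]
      apply Finset.filter_congr
      intro A _
      constructor
      · intro h; omega
      · intro h; omega
  rw [hS0, hS1]
  linear_combination (-(r * Pq)) * hsum2

attribute [local instance 10] Classical.propDecidable

lemma smoothing (r γ Γ S : ℝ) (q sn : ℕ) (hr : 0 < r) (hγ0 : 0 ≤ γ) (hγΓ : γ ≤ Γ)
    (hΓr : Γ ≤ r) (hq1 : 1 ≤ q) (hqs : q + 2 ≤ sn) (hcard : Fintype.card ι = sn)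
    (hS : (q:ℝ) * (r + Γ - γ) * ((sn:ℝ) / ((sn:ℝ) - 1)) ≤ S) :
    ∀ d (g : ι → ℝ), (∀ l, γ ≤ g l ∧ g l ≤ Γ) → (∑ l, g l = S) →
      (univ.filter (fun l => g l ≠ S / (sn:ℝ))).card ≤ d →
      ∑ A ∈ univ.powerset.filter (fun A => A.card ≤ q), W r g univ A
        ≤ ∑ A ∈ univ.powerset.filter (fun A => A.card ≤ q),
            W r (fun _ : ι => S / (sn:ℝ)) univ A := by
  classical
  have hsn0 : (0:ℝ) < (sn:ℝ) := by
    have : (0:ℕ) < sn := by omega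
    exact_mod_cast this
  have hsn1 : (0:ℝ) < (sn:ℝ) - 1 := by
    have : (1:ℕ) < sn := by omega
    have := (Nat.one_lt_cast (α := ℝ)).2 this
    linarith
  intro d
  induction d with
  | zero =>
    intro g hg hsum hc
    have hempty : univ.filter (fun l => g l ≠ S / (sn:ℝ)) = ∅ :=
      Finset.card_eq_zero.1 (Nat.le_zero.1 hc)
    have hgm : g = fun _ => S / (sn:ℝ) := by
      funext l
      by_contra h
      have : l ∈ univ.filter (fun l => g l ≠ S / (sn:ℝ)) := by
        simp only [mem_filter, mem_univ, true_and]; exact h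
      rw [hempty] at this
      exact absurd this (Finset.notMem_empty l)
    rw [hgm]
  | succ d ih =>
    intro g hg hsum hc
    by_cases hd : (univ.filter (fun l => g l ≠ S / (sn:ℝ))).card ≤ d
    · exact ih g hg hsum hd
    · set m := S / (sn:ℝ) with hmdef
      have hmS : m * (sn:ℝ) = S := by rw [hmdef]; field_simp
      have hcount : ∀ c : ι → ℝ, ∑ l, (c l : ℝ) = S → (∀ l, c l ≤ m) → (∃ l, c l < m) → False := by
        intro c hcS hcle hexc
        obtain ⟨l₀, hl₀⟩ := hexc
        have h1 : ∑ l, c l < ∑ l : ι, m := by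
          apply Finset.sum_lt_sum (fun l _ => hcle l) ⟨l₀, Finset.mem_univ l₀, hl₀⟩
        rw [Finset.sum_const, Finset.card_univ, hcard, nsmul_eq_mul, mul_comm] at h1
        rw [hcS, hmS] at h1
        exact lt_irrefl S h1
      have hex : ∃ l, g l ≠ m := by
        by_contra h
        push_neg at h
        have : (univ.filter (fun l => g l ≠ m)).card = 0 := by
          rw [Finset.card_eq_zero]
          apply Finset.filter_eq_empty_iff.2
          intro l _
          simp [h l]
        omega
      have hexgt : ∃ i, m < g i := by
        by_contra h
        push_neg at h
        obtain ⟨l, hl⟩ := hex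
        exact hcount g hsum h ⟨l, lt_of_le_of_ne (h l) hl⟩
      have hexlt : ∃ j, g j < m := by
        by_contra h
        push_neg at h
        obtain ⟨l, hl⟩ := hex
        have h1 : ∑ l : ι, m < ∑ l, g l := by
          obtain ⟨i, hi⟩ := hexgt
          apply Finset.sum_lt_sum (fun l _ => h l) ⟨i, Finset.mem_univ i, hi⟩
        rw [Finset.sum_const, Finset.card_univ, hcard, nsmul_eq_mul, mul_comm, hmS, hsum] at h1
        exact lt_irrefl S h1
      obtain ⟨i, hi⟩ := hexgt
      obtain ⟨j, hj⟩ := hexlt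
      have hij : i ≠ j := by
        intro h
        rw [h] at hi
        exact lt_irrefl _ (lt_trans hi hj)
      set g' := Function.update (Function.update g i m) j (g i + g j - m) with hg'def
      have hg'i : g' i = m := by
        rw [hg'def, Function.update_of_ne hij, Function.update_self]
      have hg'j : g' j = g i + g j - m := by
        rw [hg'def, Function.update_self]
      have hg'off : ∀ l, l ≠ i → l ≠ j → g' l = g l := by
        intro l hli hlj
        rw [hg'def, Function.update_of_ne hlj, Function.update_of_ne hli]
      have hsum2 : g' i + g' j = g i + g j := by rw [hg'i, hg'j]; ring
      -- invariants for g'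
      have hmγ : γ ≤ m := by
        have h1 : ∑ l : ι, γ ≤ ∑ l, g l := Finset.sum_le_sum (fun l _ => (hg l).1)
        rw [Finset.sum_const, Finset.card_univ, hcard, nsmul_eq_mul, hsum] at h1
        rw [hmdef, le_div_iff₀ hsn0]
        linarith
      have hmΓ : m ≤ Γ := by
        have h1 : ∑ l, g l ≤ ∑ l : ι, Γ := Finset.sum_le_sum (fun l _ => (hg l).2)
        rw [Finset.sum_const, Finset.card_univ, hcard, nsmul_eq_mul, hsum] at h1
        rw [hmdef, div_le_iff₀ hsn0]
        linarith
      have hg' : ∀ l, γ ≤ g' l ∧ g' l ≤ Γ := by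
        intro l
        by_cases hli : l = i
        · rw [hli, hg'i]; exact ⟨hmγ, hmΓ⟩
        by_cases hlj : l = j
        · rw [hlj, hg'j]
          constructor
          · have := (hg j).1; linarith
          · have := (hg i).2; linarith
        · rw [hg'off l hli hlj]; exact hg l
      have hsum' : ∑ l, g' l = S := by
        have h1 : ∑ l, g' l = g' j + ∑ l ∈ univ.erase j, g' l := by
          rw [← Finset.add_sum_erase _ _ (Finset.mem_univ j)]
        have h2 : ∑ l ∈ univ.erase j, g' l = g' i + ∑ l ∈ (univ.erase j).erase i, g' l := by
          rw [← Finset.add_sum_erase _ _ (Finset.mem_erase.2 ⟨hij, Finset.mem_univ i⟩)]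
        have h3 : ∑ l ∈ (univ.erase j).erase i, g' l = ∑ l ∈ (univ.erase j).erase i, g l := by
          apply Finset.sum_congr rfl
          intro l hl
          simp only [Finset.mem_erase] at hl
          exact hg'off l hl.1 hl.2.1
        have h4 : ∑ l, g l = g j + ∑ l ∈ univ.erase j, g l := by
          rw [← Finset.add_sum_erase _ _ (Finset.mem_univ j)]
        have h5 : ∑ l ∈ univ.erase j, g l = g i + ∑ l ∈ (univ.erase j).erase i, g l := by
          rw [← Finset.add_sum_erase _ _ (Finset.mem_erase.2 ⟨hij, Finset.mem_univ i⟩)]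
        rw [h1, h2, h3, hg'i, hg'j]
        rw [h4, h5] at hsum
        linarith
      -- the step inequality
      have hstep := step_eq r g g' hij q hq1 hg'off hsum2
      have hkey : (∑ A ∈ ((univ.erase i).erase j).powerset.filter
            (fun A => A.card + 1 = q), W r g ((univ.erase i).erase j) A)
          ≤ ∑ A ∈ ((univ.erase i).erase j).powerset.filter
            (fun A => A.card = q), W r g ((univ.erase i).erase j) A := by
        apply key_lemma r γ Γ S q sn _ g hr hγ0 hγΓ hΓr hq1 hqs
        · rw [Finset.card_erase_of_mem (Finset.mem_erase.2 ⟨hij.symm, Finset.mem_univ j⟩),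
            Finset.card_erase_of_mem (Finset.mem_univ i), Finset.card_univ, hcard]
          omega
        · intro l hl
          exact hg l
        · have h4 : ∑ l, g l = g i + ∑ l ∈ univ.erase i, g l :=
            (Finset.add_sum_erase _ _ (Finset.mem_univ i)).symm
          have h5 : ∑ l ∈ univ.erase i, g l = g j + ∑ l ∈ (univ.erase i).erase j, g l :=
            (Finset.add_sum_erase _ _ (Finset.mem_erase.2 ⟨hij.symm, Finset.mem_univ j⟩)).symm
          have hgiΓ : g i ≤ Γ := (hg i).2
          have hgjm : g j ≤ m := hj.le
          rw [h4, h5] at hsum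
          rw [hmdef] at hgjm
          linarith
        · exact hS
      have hΔp : 0 ≤ g' i * g' j - g i * g j := by
        rw [hg'i, hg'j]
        nlinarith [hi, hj]
      calc ∑ A ∈ univ.powerset.filter (fun A => A.card ≤ q), W r g univ A
          ≤ ∑ A ∈ univ.powerset.filter (fun A => A.card ≤ q), W r g' univ A := by
            rw [hstep]
            nlinarith [mul_nonneg hΔp (sub_nonneg.2 hkey)]
        _ ≤ _ := by
            apply ih g' hg' hsum'
            have hifil : i ∈ univ.filter (fun l => g l ≠ m) := by
              simp only [mem_filter, mem_univ, true_and]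
              exact fun h => absurd h.symm (ne_of_lt hi)
            have hsub : univ.filter (fun l => g' l ≠ m)
                ⊆ (univ.filter (fun l => g l ≠ m)).erase i := by
              intro l hl
              simp only [mem_filter, mem_univ, true_and] at hl
              rw [Finset.mem_erase]
              have hli : l ≠ i := by
                intro h
                rw [h, hg'i] at hl
                exact hl rfl
              refine ⟨hli, ?_⟩
              simp only [mem_filter, mem_univ, true_and]
              by_cases hlj : l = j
              · rw [hlj]
                exact fun h => absurd h.symm (ne_of_gt hj)
              · rw [hg'off l hli hlj] at hl
                exact hl
            have hle := Finset.card_le_card hsub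
            rw [Finset.card_erase_of_mem hifil] at hle
            omega

lemma const_eval (r m : ℝ) (k : ℕ) :
    ∑ A ∈ powersetCard k (univ : Finset ι), W r (fun _ : ι => m) univ A
      = (Nat.choose (Fintype.card ι) k : ℝ) * m ^ k * (r - m) ^ (Fintype.card ι - k) := by
  classical
  have h : ∀ A ∈ powersetCard k (univ : Finset ι),
      W r (fun _ : ι => m) univ A = m ^ k * (r - m) ^ (Fintype.card ι - k) := by
    intro A hA
    rw [Finset.mem_powersetCard] at hA
    unfold W
    rw [Finset.prod_const, Finset.prod_const, hA.2]
    congr 2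
    rw [Finset.card_sdiff_of_subset hA.1, Finset.card_univ, hA.2]
  rw [Finset.sum_congr rfl h, Finset.sum_const, Finset.card_powersetCard, Finset.card_univ,
    nsmul_eq_mul, mul_assoc]

end Smooth

open Smooth in
/-- The key smoothing bound: if `Σ gᵢ ≥ q(r + Γ − γ)(c−1)/(c−2)` then
`Σ_{k=0}^{q} M(g₁,…,g_{c−1}; k) ≤ Σ_{k=0}^{q} C(c−1,k)(S/(c−1))^k (r − S/(c−1))^{c−1−k}`,
where `S = Σ gᵢ`. -/
theorem stmt7 (r : ℝ) (hr : 2 ≤ r) (c : ℕ) (hc : 5 ≤ c) (q : ℕ) (hq : 1 ≤ q)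
    (g : Fin (c - 1) → ℝ) (hg : ∀ i, 0 ≤ g i ∧ g i ≤ r) (Γ γ : ℝ)
    (hΓ : IsGreatest (Set.range g) Γ) (hγ : IsLeast (Set.range g) γ)
    (hsum : (q : ℝ) * (r + Γ - γ) * (((c : ℝ) - 1) / ((c : ℝ) - 2)) ≤ ∑ i, g i) :
    ∑ k ∈ Finset.range (q + 1), Msum r g k
      ≤ ∑ k ∈ Finset.range (q + 1),
          (Nat.choose (c - 1) k : ℝ) * ((∑ i, g i) / ((c : ℝ) - 1)) ^ k
            * (r - (∑ i, g i) / ((c : ℝ) - 1)) ^ (c - 1 - k) := by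
  classical
  have hcι : Fintype.card (Fin (c-1)) = c - 1 := Fintype.card_fin _
  have hc1 : (1:ℕ) ≤ c := by omega
  have hcast1 : ((c - 1 : ℕ) : ℝ) = (c:ℝ) - 1 := by
    push_cast [Nat.cast_sub hc1]
    ring
  have hcast2 : ((c - 1 : ℕ) : ℝ) - 1 = (c:ℝ) - 2 := by rw [hcast1]; ring
  have hcR : (5:ℝ) ≤ (c:ℝ) := by exact_mod_cast hc
  have hc1ne : ((c:ℝ) - 1) ≠ 0 := by linarith
  have hΓub : ∀ i, g i ≤ Γ := fun i => hΓ.2 (Set.mem_range_self i)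
  have hγlb : ∀ i, γ ≤ g i := fun i => hγ.2 (Set.mem_range_self i)
  obtain ⟨x0, hx0⟩ := hγ.1
  obtain ⟨x1, hx1⟩ := hΓ.1
  have hγ0 : 0 ≤ γ := hx0 ▸ (hg x0).1
  have hΓr : Γ ≤ r := hx1 ▸ (hg x1).2
  have hγΓ : γ ≤ Γ := le_trans (hγlb x0) (hΓub x0)
  have hr0 : (0:ℝ) < r := by linarith
  by_cases hall : ∀ i, g i = r
  · -- all values equal to r : equality term by term
    have hgr : g = fun _ => r := funext hall
    have hSr : ∑ i, g i = ((c:ℝ) - 1) * r := by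
      rw [hgr, Finset.sum_const, Finset.card_univ, hcι, nsmul_eq_mul, hcast1]
    have hdiv : (∑ i, g i) / ((c:ℝ) - 1) = r := by
      rw [hSr, mul_comm, mul_div_assoc, div_self hc1ne, mul_one]
    apply le_of_eq
    apply Finset.sum_congr rfl
    intro k _
    rw [Msum_eq, hdiv]
    calc ∑ A ∈ powersetCard k univ, W r g univ A
        = ∑ A ∈ powersetCard k univ, W r (fun _ : Fin (c-1) => r) univ A := by rw [hgr]
      _ = (Nat.choose (c-1) k : ℝ) * r ^ k * (r - r) ^ (c - 1 - k) := by
          rw [const_eval, hcι]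
  · -- main smoothing case
    have hq2 : q + 2 ≤ c - 1 := by
      by_contra hcon
      push_neg at hcon
      have hqc : (c:ℝ) - 2 ≤ (q:ℝ) := by
        have : c ≤ q + 2 := by omega
        have := (Nat.cast_le (α := ℝ)).2 this
        push_cast at this
        linarith
      have hSub : ∑ i, g i ≤ ((c:ℝ) - 1) * Γ := by
        have := Finset.sum_le_card_nsmul univ g Γ (fun i _ => hΓub i)
        rwa [Finset.card_univ, hcι, nsmul_eq_mul, hcast1] at this
      have hpos : (0:ℝ) < r + Γ - γ := by linarith
      have hratio : (0:ℝ) < ((c:ℝ) - 1) / ((c:ℝ) - 2) := by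
        apply div_pos <;> linarith
      have h1 : ((c:ℝ) - 2) * (r + Γ - γ) * (((c:ℝ) - 1)/((c:ℝ) - 2)) ≤ ∑ i, g i := by
        refine le_trans ?_ hsum
        apply mul_le_mul_of_nonneg_right _ hratio.le
        apply mul_le_mul_of_nonneg_right hqc hpos.le
      have hc2ne : (c:ℝ) - 2 ≠ 0 := by linarith
      have h3 : ((c:ℝ) - 2) * (((c:ℝ) - 1)/((c:ℝ) - 2)) = (c:ℝ) - 1 := by
        field_simp
      have h2 : ((c:ℝ) - 2) * (r + Γ - γ) * (((c:ℝ) - 1)/((c:ℝ) - 2))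
          = ((c:ℝ) - 1) * (r + Γ - γ) := by
        linear_combination (r + Γ - γ) * h3
      have hγr : r ≤ γ := by nlinarith [h1, h2, hSub]
      exact hall (fun i => le_antisymm (hg i).2 (le_trans hγr (hγlb i)))
    -- rewrite LHS
    have hL : ∑ k ∈ Finset.range (q + 1), Msum r g k
        = ∑ A ∈ univ.powerset.filter (fun A => A.card ≤ q), W r g univ A := by
      rw [Finset.sum_congr rfl (fun k _ => Msum_eq r g k), sum_range_eq]
    have hm : (∑ i, g i) / (((c - 1 : ℕ)):ℝ) = (∑ i, g i) / ((c:ℝ) - 1) := by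
      rw [hcast1]
    have hR : ∑ k ∈ Finset.range (q + 1),
          (Nat.choose (c - 1) k : ℝ) * ((∑ i, g i) / ((c : ℝ) - 1)) ^ k
            * (r - (∑ i, g i) / ((c : ℝ) - 1)) ^ (c - 1 - k)
        = ∑ A ∈ univ.powerset.filter (fun A => A.card ≤ q),
            W r (fun _ : Fin (c-1) => (∑ i, g i) / (((c - 1:ℕ)):ℝ)) univ A := by
      rw [← sum_range_eq]
      apply Finset.sum_congr rfl
      intro k _
      rw [const_eval, hcι, hm]
    rw [hL, hR]
    apply smoothing r γ Γ (∑ i, g i) q (c-1) hr0 hγ0 hγΓ hΓr hq hq2 hcι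
      ?_ _ g (fun l => ⟨hγlb l, hΓub l⟩) rfl le_rfl
    rw [hcast1]
    have he : (c:ℝ) - 1 - 1 = (c:ℝ) - 2 := by ring
    rw [he]
    exact hsum
end

section
/- Let c ≥ 5, q ≥ 0, and 0 ≤ β < (c−2q−2)/c be real. Let d⁺, d⁻ > 0 with d⁺ + d⁻ = r(c−1) for some real r ≥ 2, and suppose d⁺/d⁻ ≥ (1−β)/(1+β) and d⁻ ≤ r(c−1)(1+β)/2. If q < c−1 then Σ_{k=0}^{q} C(c−1,k)(d⁺/(c−1))^k (d⁻/(c−1))^{c−1−k} ≤ C(c−1, q+1)·(r/2)^{c−1}·(1+β)^{c−2−2q}·(q+1)/(c(1−β)−2q−2). -/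
set_option maxHeartbeats 1000000


open Finset

private lemma geomSumLe {ρ : ℝ} (h0 : 0 ≤ ρ) (h1 : ρ < 1) (n : ℕ) :
    ∑ i ∈ Finset.range n, ρ ^ i ≤ 1 / (1 - ρ) := by
  have hd : 0 < 1 - ρ := by linarith
  rw [geom_sum_eq (ne_of_lt h1), show ρ - 1 = -(1 - ρ) by ring, div_neg, ← neg_div, neg_sub]
  exact div_le_div₀ zero_le_one (by linarith [pow_nonneg h0 n]) hd le_rfl

/-- The analytic core of Theorem 4: for `0 ≤ β < (c−2q−2)/c`, `d⁺ + d⁻ = r(c−1)`,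
`d⁺/d⁻ ≥ (1−β)/(1+β)` and `d⁻ ≤ r(c−1)(1+β)/2`, if `q < c−1` then
`Σ_{k=0}^{q} C(c−1,k)(d⁺/(c−1))^k (d⁻/(c−1))^{c−1−k}
  ≤ C(c−1,q+1)(r/2)^{c−1}(1+β)^{c−2−2q}(q+1)/(c(1−β)−2q−2)`. -/
theorem stmt13 (c : ℕ) (hc : 5 ≤ c) (q : ℕ) (β : ℝ)
    (hβ0 : 0 ≤ β) (hβ : β < ((c : ℝ) - 2 * (q : ℝ) - 2) / (c : ℝ))
    (r dp dm : ℝ) (hr : 2 ≤ r) (hdp : 0 < dp) (hdm : 0 < dm)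
    (hsum : dp + dm = r * ((c : ℝ) - 1))
    (hratio : dp / dm ≥ (1 - β) / (1 + β))
    (hdmle : dm ≤ r * ((c : ℝ) - 1) * (1 + β) / 2)
    (hq : q < c - 1) :
    ∑ k ∈ Finset.range (q + 1),
        (Nat.choose (c - 1) k : ℝ) * (dp / ((c : ℝ) - 1)) ^ k
          * (dm / ((c : ℝ) - 1)) ^ (c - 1 - k)
      ≤ (Nat.choose (c - 1) (q + 1) : ℝ) * (r / 2) ^ (c - 1) * (1 + β) ^ (c - 2 - 2 * q)
          * ((q : ℝ) + 1) / ((c : ℝ) * (1 - β) - 2 * (q : ℝ) - 2) := by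
  have hc5 : (5 : ℝ) ≤ (c : ℝ) := by exact_mod_cast hc
  have hc0 : (0 : ℝ) < (c : ℝ) := by linarith
  have hcb : β * (c : ℝ) < (c : ℝ) - 2 * (q : ℝ) - 2 := (lt_div_iff₀ hc0).mp hβ
  have hD : 0 < (c : ℝ) * (1 - β) - 2 * (q : ℝ) - 2 := by nlinarith
  have hcqR : 2 * (q : ℝ) + 2 < (c : ℝ) := by nlinarith
  have hcq : 2 * q + 3 ≤ c := by
    have h2 : 2 * q + 2 < c := by exact_mod_cast hcqR
    omega
  set N : ℝ := (c : ℝ) - 1 with hN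
  have hN0 : (0 : ℝ) < N := by simp [hN]; linarith
  clear_value N
  have hB : (1 : ℝ) ≤ 1 + β := by linarith
  have hB0 : (0 : ℝ) < 1 + β := by linarith
  -- per-term bound
  have hx : 0 < dp / N := div_pos hdp hN0
  have hy : 0 < dm / N := div_pos hdm hN0
  have hxy : (dp / N) * (dm / N) ≤ (r / 2) ^ 2 := by
    have h3 : (dp + dm) ^ 2 = (r * N) ^ 2 := by rw [hsum]
    rw [div_mul_div_comm, div_le_iff₀ (by positivity)]
    nlinarith [sq_nonneg (dp - dm), h3, sq_nonneg (r * N)]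
  have hyb : dm / N ≤ r * (1 + β) / 2 := by
    rw [div_le_iff₀ hN0]
    nlinarith
  have hr2 : (0 : ℝ) < r / 2 := by linarith
  have hterm : ∀ k ≤ q, (dp / N) ^ k * (dm / N) ^ (c - 1 - k)
      ≤ (r / 2) ^ (c - 1) * (1 + β) ^ (c - 1 - 2 * k) := by
    intro k hk
    have e1 : c - 1 - k = k + (c - 1 - 2 * k) := by omega
    set m := c - 1 - 2 * k with hm
    have e2 : 2 * k + m = c - 1 := by omega
    calc (dp / N) ^ k * (dm / N) ^ (c - 1 - k)
        = ((dp / N) * (dm / N)) ^ k * (dm / N) ^ m := by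
          rw [e1, pow_add, mul_pow]; ring
      _ ≤ ((r / 2) ^ 2) ^ k * (r * (1 + β) / 2) ^ m := by
          apply mul_le_mul
          · exact pow_le_pow_left₀ (by positivity) hxy k
          · exact pow_le_pow_left₀ hy.le hyb m
          · positivity
          · positivity
      _ = (r / 2) ^ (2 * k) * ((r / 2) ^ m * (1 + β) ^ m) := by
          rw [← pow_mul, ← mul_pow]; ring_nf
      _ = (r / 2) ^ (c - 1) * (1 + β) ^ m := by
          rw [← mul_assoc, ← pow_add, e2]
  -- the combinatorial sum bound
  set B : ℝ := 1 + β with hBdef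
  set ρ : ℝ := ((q : ℝ) + 1) * B ^ 2 / (N - q) with hρ
  have hNq : (0 : ℝ) < N - q := by simp [hN]; linarith
  have hkey : B * ((c : ℝ) * (1 - β) - 2 * (q : ℝ) - 2) ≤ N - q - ((q : ℝ) + 1) * B ^ 2 := by
    have h1 : (0 : ℝ) ≤ ((c : ℝ) - (q : ℝ) - 1) * (β * β) := by
      apply mul_nonneg _ (mul_nonneg hβ0 hβ0)
      linarith
    simp only [hBdef, hN]
    nlinarith
  have hE : 0 < N - q - ((q : ℝ) + 1) * B ^ 2 := lt_of_lt_of_le (by positivity) hkey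
  have hρ0 : 0 ≤ ρ := by positivity
  have hρ1 : ρ < 1 := by
    rw [hρ, div_lt_one hNq]; linarith
  -- cast of choose identity
  have hqn : q + 1 ≤ c - 1 := by omega
  have hchoose : ∀ k, k + 1 ≤ q + 1 →
      ((c - 1).choose k : ℝ) * (N - q) ≤ ((c - 1).choose (k + 1) : ℝ) * ((q : ℝ) + 1) := by
    intro k hk
    have hnat : (c - 1).choose k * (c - 1 - q) ≤ (c - 1).choose (k + 1) * (q + 1) := by
      calc (c - 1).choose k * (c - 1 - q) ≤ (c - 1).choose k * (c - 1 - k) :=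
            Nat.mul_le_mul_left _ (by omega)
        _ = (c - 1).choose (k + 1) * (k + 1) := (Nat.choose_succ_right_eq _ _).symm
        _ ≤ (c - 1).choose (k + 1) * (q + 1) := Nat.mul_le_mul_left _ (by omega)
    have hcast : ((c - 1 - q : ℕ) : ℝ) = N - q := by
      have : ((c - 1 - q : ℕ) : ℝ) = ((c : ℝ) - 1) - q := by
        push_cast [Nat.cast_sub (by omega : q ≤ c - 1), Nat.cast_sub (by omega : 1 ≤ c)]
        ring
      rw [this, hN]
    calc ((c - 1).choose k : ℝ) * (N - q) = (((c - 1).choose k * (c - 1 - q) : ℕ) : ℝ) := by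
          push_cast [hcast]; ring
      _ ≤ (((c - 1).choose (k + 1) * (q + 1) : ℕ) : ℝ) := by exact_mod_cast hnat
      _ = ((c - 1).choose (k + 1) : ℝ) * ((q : ℝ) + 1) := by push_cast; ring
  -- step lemma
  have hstep : ∀ k, k < q → ((c - 1).choose k : ℝ) * B ^ (c - 1 - 2 * k)
      ≤ ρ * (((c - 1).choose (k + 1) : ℝ) * B ^ (c - 1 - 2 * (k + 1))) := by
    intro k hk
    have e3 : c - 1 - 2 * k = (c - 1 - 2 * (k + 1)) + 2 := by omega
    set m := c - 1 - 2 * (k + 1) with hm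
    rw [e3, hρ, div_mul_eq_mul_div, le_div_iff₀ hNq, pow_add]
    have h1 := hchoose k (by omega)
    have hpow : (0 : ℝ) < B ^ m * B ^ 2 := by positivity
    calc ((c - 1).choose k : ℝ) * (B ^ m * B ^ 2) * (N - q)
        = (((c - 1).choose k : ℝ) * (N - q)) * (B ^ m * B ^ 2) := by ring
      _ ≤ (((c - 1).choose (k + 1) : ℝ) * ((q : ℝ) + 1)) * (B ^ m * B ^ 2) := by
          exact mul_le_mul_of_nonneg_right h1 hpow.le
      _ = ((q : ℝ) + 1) * B ^ 2 * (((c - 1).choose (k + 1) : ℝ) * B ^ m) := by ring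
  -- downward induction
  have hgeo : ∀ j, j ≤ q → ((c - 1).choose (q - j) : ℝ) * B ^ (c - 1 - 2 * (q - j))
      ≤ ρ ^ j * (((c - 1).choose q : ℝ) * B ^ (c - 1 - 2 * q)) := by
    intro j
    induction j with
    | zero => intro _; simp
    | succ j ih =>
      intro hj
      have hj' : j ≤ q := by omega
      have hlt : q - (j + 1) < q := by omega
      have heq : q - (j + 1) + 1 = q - j := by omega
      calc ((c - 1).choose (q - (j + 1)) : ℝ) * B ^ (c - 1 - 2 * (q - (j + 1)))
          ≤ ρ * (((c - 1).choose (q - (j + 1) + 1) : ℝ) * B ^ (c - 1 - 2 * (q - (j + 1) + 1))) :=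
            hstep _ hlt
        _ = ρ * (((c - 1).choose (q - j) : ℝ) * B ^ (c - 1 - 2 * (q - j))) := by rw [heq]
        _ ≤ ρ * (ρ ^ j * (((c - 1).choose q : ℝ) * B ^ (c - 1 - 2 * q))) :=
            mul_le_mul_of_nonneg_left (ih hj') hρ0
        _ = ρ ^ (j + 1) * (((c - 1).choose q : ℝ) * B ^ (c - 1 - 2 * q)) := by ring
  set Aq : ℝ := ((c - 1).choose q : ℝ) * B ^ (c - 1 - 2 * q) with hAq
  have hAq0 : 0 ≤ Aq := by positivity
  have hsum2 : ∑ k ∈ Finset.range (q + 1), ((c - 1).choose k : ℝ) * B ^ (c - 1 - 2 * k)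
      ≤ (1 / (1 - ρ)) * Aq := by
    have hrefl := Finset.sum_range_reflect
      (fun k => ((c - 1).choose k : ℝ) * B ^ (c - 1 - 2 * k)) (q + 1)
    rw [← hrefl]
    calc ∑ j ∈ Finset.range (q + 1),
          ((c - 1).choose (q + 1 - 1 - j) : ℝ) * B ^ (c - 1 - 2 * (q + 1 - 1 - j))
        ≤ ∑ j ∈ Finset.range (q + 1), ρ ^ j * Aq := by
          apply Finset.sum_le_sum
          intro j hj
          simp only [Finset.mem_range] at hj
          have : q + 1 - 1 - j = q - j := by omega
          rw [this]
          exact hgeo j (by omega)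
      _ = (∑ j ∈ Finset.range (q + 1), ρ ^ j) * Aq := by rw [← Finset.sum_mul]
      _ ≤ (1 / (1 - ρ)) * Aq :=
          mul_le_mul_of_nonneg_right (geomSumLe hρ0 hρ1 (q + 1)) hAq0
  -- final bound on (1/(1-ρ)) * Aq
  set D : ℝ := (c : ℝ) * (1 - β) - 2 * (q : ℝ) - 2 with hDdef
  have hfin : (1 / (1 - ρ)) * Aq
      ≤ ((c - 1).choose (q + 1) : ℝ) * B ^ (c - 2 - 2 * q) * ((q : ℝ) + 1) / D := by
    have h1ρ : 1 - ρ = (N - q - ((q : ℝ) + 1) * B ^ 2) / (N - q) := by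
      rw [hρ]; field_simp
    have e4 : c - 1 - 2 * q = (c - 2 - 2 * q) + 1 := by omega
    have hch : ((c - 1).choose q : ℝ) * (N - q) = ((c - 1).choose (q + 1) : ℝ) * ((q : ℝ) + 1) := by
      have hnat : (c - 1).choose (q + 1) * (q + 1) = (c - 1).choose q * (c - 1 - q) :=
        Nat.choose_succ_right_eq _ _
      have hcast : ((c - 1 - q : ℕ) : ℝ) = N - q := by
        push_cast [Nat.cast_sub (by omega : q ≤ c - 1), Nat.cast_sub (by omega : 1 ≤ c), hN]
        ring
      have := congrArg (fun x : ℕ => (x : ℝ)) hnat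
      push_cast at this
      rw [hcast] at this
      linarith
    have e5 : B ^ (c - 1 - 2 * q) = B ^ (c - 2 - 2 * q) * B := by rw [e4, pow_succ]
    rw [h1ρ, hAq, e5]
    rw [one_div, inv_div, div_mul_eq_mul_div, div_le_div_iff₀ hE hD]
    calc (N - q) * (((c-1).choose q : ℝ) * (B ^ (c - 2 - 2*q) * B)) * D
        = (((c-1).choose q : ℝ) * (N - q)) * B ^ (c - 2 - 2*q) * (B * D) := by ring
      _ = (((c-1).choose (q+1) : ℝ) * ((q:ℝ)+1)) * B ^ (c - 2 - 2*q) * (B * D) := by rw [hch]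
      _ ≤ (((c-1).choose (q+1) : ℝ) * ((q:ℝ)+1)) * B ^ (c - 2 - 2*q)
            * (N - q - ((q:ℝ)+1) * B ^ 2) := by
          apply mul_le_mul_of_nonneg_left hkey
          positivity
      _ = ((c-1).choose (q+1) : ℝ) * B ^ (c - 2 - 2*q) * ((q:ℝ)+1)
            * (N - q - ((q:ℝ)+1) * B ^ 2) := by ring
  -- put everything together
  calc ∑ k ∈ Finset.range (q + 1),
        ((c - 1).choose k : ℝ) * (dp / N) ^ k * (dm / N) ^ (c - 1 - k)
      ≤ ∑ k ∈ Finset.range (q + 1),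
          (r / 2) ^ (c - 1) * (((c - 1).choose k : ℝ) * B ^ (c - 1 - 2 * k)) := by
        apply Finset.sum_le_sum
        intro k hk
        simp only [Finset.mem_range] at hk
        have := hterm k (by omega)
        have h2 : ((c - 1).choose k : ℝ) * (dp / N) ^ k * (dm / N) ^ (c - 1 - k)
            = ((c - 1).choose k : ℝ) * ((dp / N) ^ k * (dm / N) ^ (c - 1 - k)) := by ring
        rw [h2]
        calc ((c - 1).choose k : ℝ) * ((dp / N) ^ k * (dm / N) ^ (c - 1 - k))
            ≤ ((c - 1).choose k : ℝ) * ((r / 2) ^ (c - 1) * B ^ (c - 1 - 2 * k)) :=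
              mul_le_mul_of_nonneg_left this (Nat.cast_nonneg _)
          _ = (r / 2) ^ (c - 1) * (((c - 1).choose k : ℝ) * B ^ (c - 1 - 2 * k)) := by ring
    _ = (r / 2) ^ (c - 1) * ∑ k ∈ Finset.range (q + 1),
          ((c - 1).choose k : ℝ) * B ^ (c - 1 - 2 * k) := by rw [← Finset.mul_sum]
    _ ≤ (r / 2) ^ (c - 1) * ((1 / (1 - ρ)) * Aq) :=
        mul_le_mul_of_nonneg_left hsum2 (by positivity)
    _ ≤ (r / 2) ^ (c - 1) * (((c - 1).choose (q + 1) : ℝ) * B ^ (c - 2 - 2 * q) * ((q : ℝ) + 1) / D) :=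
        mul_le_mul_of_nonneg_left hfin (by positivity)
    _ = ((c - 1).choose (q + 1) : ℝ) * (r / 2) ^ (c - 1) * B ^ (c - 2 - 2 * q) * ((q : ℝ) + 1) / D := by
        ring
end

section
/- For α ∈ {1, 2, 3} and c ≥ 13, let f_α(c) = C(c−1, ⌊(c−2)/4⌋+1) · ((2c−2+α)/(2c−2))^{c−2−2⌊(c−2)/4⌋} · (⌊(c−2)/4⌋+1) · c / (c·(2c−2−α)/(2c−2) − 2⌊(c−2)/4⌋ − 2). Then f_α(c+4)/f_α(c) ≤ (6/5)·(32/3) < 16 = 2^{(c+4)−2}/2^{c−2}. -/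
/-- `f_α(c)` from the proof of Theorem 5. -/
noncomputable def fA (α : ℝ) (c : ℕ) : ℝ :=
  (Nat.choose (c - 1) ((c - 2) / 4 + 1) : ℝ)
    * ((2 * (c : ℝ) - 2 + α) / (2 * (c : ℝ) - 2)) ^ (c - 2 - 2 * ((c - 2) / 4))
    * (((c - 2) / 4 + 1 : ℕ) : ℝ) * (c : ℝ)
    / ((c : ℝ) * ((2 * (c : ℝ) - 2 - α) / (2 * (c : ℝ) - 2))
        - 2 * (((c - 2) / 4 : ℕ) : ℝ) - 2)


lemma fA_eq (α : ℝ) (k r : ℕ) (hr : r ≤ 3) :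
    fA α (4*k+r+2) = (Nat.choose (4*k+r+1) (k+1) : ℝ)
      * ((8*(k:ℝ)+2*(r:ℝ)+2+α)/(8*(k:ℝ)+2*(r:ℝ)+2))^(2*k+r)
      * ((k:ℝ)+1) * (4*(k:ℝ)+(r:ℝ)+2)
      / ((4*(k:ℝ)+(r:ℝ)+2) * ((8*(k:ℝ)+2*(r:ℝ)+2-α)/(8*(k:ℝ)+2*(r:ℝ)+2)) - 2*(k:ℝ) - 2) := by
  have h1 : 4*k+r+2 - 2 = 4*k+r := by omega
  have h2 : (4*k+r)/4 = k := by omega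
  have h3 : 4*k+r+2-1 = 4*k+r+1 := by omega
  have h4 : 4*k+r - 2*k = 2*k+r := by omega
  unfold fA
  rw [h1, h2, h3, h4]
  push_cast
  ring

lemma fA_eq' (α : ℝ) (k r : ℕ) (hr : r ≤ 3) :
    fA α (4*k+r+6) = (Nat.choose (4*k+r+5) (k+2) : ℝ)
      * ((8*(k:ℝ)+2*(r:ℝ)+10+α)/(8*(k:ℝ)+2*(r:ℝ)+10))^(2*k+r+2)
      * ((k:ℝ)+2) * (4*(k:ℝ)+(r:ℝ)+6)
      / ((4*(k:ℝ)+(r:ℝ)+6) * ((8*(k:ℝ)+2*(r:ℝ)+10-α)/(8*(k:ℝ)+2*(r:ℝ)+10)) - 2*(k:ℝ) - 4) := by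
  have h1 : 4*k+r+6 - 2 = 4*k+r+4 := by omega
  have h2 : (4*k+r+4)/4 = k+1 := by omega
  have h3 : 4*k+r+6-1 = 4*k+r+5 := by omega
  have h4 : 4*k+r+4 - 2*(k+1) = 2*k+r+2 := by omega
  unfold fA
  rw [h1, h2, h3, h4]
  push_cast
  ring

open Nat in
lemma choose_id (k r : ℕ) :
    (4*k+r+5).choose (k+2) * ((k+2) * ((3*k+r+1)*((3*k+r+2)*(3*k+r+3))))
      = (4*k+r+1).choose (k+1) * ((4*k+r+2)*((4*k+r+3)*((4*k+r+4)*(4*k+r+5)))) := by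
  have h1 := Nat.choose_mul_factorial_mul_factorial (show k+2 ≤ 4*k+r+5 by omega)
  have h2 := Nat.choose_mul_factorial_mul_factorial (show k+1 ≤ 4*k+r+1 by omega)
  rw [show 4*k+r+5-(k+2) = 3*k+r+3 by omega] at h1
  rw [show 4*k+r+1-(k+1) = 3*k+r by omega] at h2
  have hpos : 0 < (k+1)! * (3*k+r)! := by positivity
  apply Nat.eq_of_mul_eq_mul_right hpos
  have f1 : (3*k+r+3)! = (3*k+r+3)*((3*k+r+2)*((3*k+r+1)*(3*k+r)!)) := by
    simp [Nat.factorial_succ]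
  have f2 : (k+2)! = (k+2)*(k+1)! := by
    simp [Nat.factorial_succ]
  have f3 : (4*k+r+5)! = (4*k+r+5)*((4*k+r+4)*((4*k+r+3)*((4*k+r+2)*(4*k+r+1)!))) := by
    simp [Nat.factorial_succ]
  calc (4*k+r+5).choose (k+2) * ((k+2) * ((3*k+r+1)*((3*k+r+2)*(3*k+r+3)))) * ((k+1)! * (3*k+r)!)
      = (4*k+r+5).choose (k+2) * ((k+2)*(k+1)!) * ((3*k+r+3)*((3*k+r+2)*((3*k+r+1)*(3*k+r)!))) := by
        ring
    _ = (4*k+r+5).choose (k+2) * (k+2)! * (3*k+r+3)! := by rw [f1, f2]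
    _ = (4*k+r+5)! := h1
    _ = ((4*k+r+1).choose (k+1) * (k+1)! * (3*k+r)!) * ((4*k+r+2)*((4*k+r+3)*((4*k+r+4)*(4*k+r+5)))) := by
        rw [h2, f3]; ring
    _ = (4*k+r+1).choose (k+1) * ((4*k+r+2)*((4*k+r+3)*((4*k+r+4)*(4*k+r+5)))) * ((k+1)! * (3*k+r)!) := by
        ring

lemma master (α : ℝ) (k r : ℕ) (hk : 2 ≤ k) (hr : r ≤ 3) (hα1 : 1 ≤ α) (hα3 : α ≤ 3)
    (hpoly : 5 * ((4*(k:ℝ)+(r:ℝ)+2)*((4*(k:ℝ)+(r:ℝ)+3)*((4*(k:ℝ)+(r:ℝ)+4)*(4*(k:ℝ)+(r:ℝ)+5))))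
        * (8*(k:ℝ)+2*(r:ℝ)+2+α)^2 * (4*(k:ℝ)+(r:ℝ)+6)
        * ((4*(k:ℝ)+(r:ℝ)+2)*(8*(k:ℝ)+2*(r:ℝ)+2-α) - (2*(k:ℝ)+2)*(8*(k:ℝ)+2*(r:ℝ)+2))
        * (8*(k:ℝ)+2*(r:ℝ)+10)
      ≤ 64 * ((3*(k:ℝ)+(r:ℝ)+1)*((3*(k:ℝ)+(r:ℝ)+2)*(3*(k:ℝ)+(r:ℝ)+3)))
        * (8*(k:ℝ)+2*(r:ℝ)+2)^3 * ((k:ℝ)+1) * (4*(k:ℝ)+(r:ℝ)+2)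
        * ((4*(k:ℝ)+(r:ℝ)+6)*(8*(k:ℝ)+2*(r:ℝ)+10-α) - (2*(k:ℝ)+4)*(8*(k:ℝ)+2*(r:ℝ)+10))) :
    fA α (4*k+r+6) / fA α (4*k+r+2) ≤ 64/5 := by
  revert hpoly
  have hK2 : (2:ℝ) ≤ (k:ℝ) := by exact_mod_cast hk
  have hR0 : (0:ℝ) ≤ (r:ℝ) := Nat.cast_nonneg r
  have hR3 : (r:ℝ) ≤ 3 := by exact_mod_cast hr
  have hB : (0:ℝ) < 8*(k:ℝ)+2*(r:ℝ)+2 := by linarith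
  have hB' : (0:ℝ) < 8*(k:ℝ)+2*(r:ℝ)+10 := by linarith
  have hbpos : (0:ℝ) < (8*(k:ℝ)+2*(r:ℝ)+2+α)/(8*(k:ℝ)+2*(r:ℝ)+2) := div_pos (by linarith) hB
  have hb'nonneg : (0:ℝ) ≤ (8*(k:ℝ)+2*(r:ℝ)+10+α)/(8*(k:ℝ)+2*(r:ℝ)+10) := le_of_lt (div_pos (by linarith) hB')
  have hbb : (8*(k:ℝ)+2*(r:ℝ)+10+α)/(8*(k:ℝ)+2*(r:ℝ)+10) ≤ (8*(k:ℝ)+2*(r:ℝ)+2+α)/(8*(k:ℝ)+2*(r:ℝ)+2) := by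
    rw [div_le_div_iff₀ hB' hB]; nlinarith
  have hE : (0:ℝ) < (4*(k:ℝ)+(r:ℝ)+2) * ((8*(k:ℝ)+2*(r:ℝ)+2-α)/(8*(k:ℝ)+2*(r:ℝ)+2)) - 2*(k:ℝ) - 2 := by
    have h : (4*(k:ℝ)+(r:ℝ)+2) * ((8*(k:ℝ)+2*(r:ℝ)+2-α)/(8*(k:ℝ)+2*(r:ℝ)+2)) - 2*(k:ℝ) - 2
        = ((4*(k:ℝ)+(r:ℝ)+2)*(8*(k:ℝ)+2*(r:ℝ)+2-α) - (2*(k:ℝ)+2)*(8*(k:ℝ)+2*(r:ℝ)+2))/(8*(k:ℝ)+2*(r:ℝ)+2) := by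
      field_simp; ring
    rw [h]
    apply div_pos _ hB
    nlinarith
  have hE' : (0:ℝ) < (4*(k:ℝ)+(r:ℝ)+6) * ((8*(k:ℝ)+2*(r:ℝ)+10-α)/(8*(k:ℝ)+2*(r:ℝ)+10)) - 2*(k:ℝ) - 4 := by
    have h : (4*(k:ℝ)+(r:ℝ)+6) * ((8*(k:ℝ)+2*(r:ℝ)+10-α)/(8*(k:ℝ)+2*(r:ℝ)+10)) - 2*(k:ℝ) - 4
        = ((4*(k:ℝ)+(r:ℝ)+6)*(8*(k:ℝ)+2*(r:ℝ)+10-α) - (2*(k:ℝ)+4)*(8*(k:ℝ)+2*(r:ℝ)+10))/(8*(k:ℝ)+2*(r:ℝ)+10) := by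
      field_simp; ring
    rw [h]
    apply div_pos _ hB'
    nlinarith
  have hCh : (0:ℝ) < ((4*k+r+1).choose (k+1) : ℝ) := by
    exact_mod_cast Nat.choose_pos (show k+1 ≤ 4*k+r+1 by omega)
  have hCh' : (0:ℝ) ≤ ((4*k+r+5).choose (k+2) : ℝ) := Nat.cast_nonneg _
  have hchR : ((4*k+r+5).choose (k+2) : ℝ) * (((k:ℝ)+2) * ((3*(k:ℝ)+(r:ℝ)+1)*((3*(k:ℝ)+(r:ℝ)+2)*(3*(k:ℝ)+(r:ℝ)+3))))
      = ((4*k+r+1).choose (k+1) : ℝ) * ((4*(k:ℝ)+(r:ℝ)+2)*((4*(k:ℝ)+(r:ℝ)+3)*((4*(k:ℝ)+(r:ℝ)+4)*(4*(k:ℝ)+(r:ℝ)+5)))) := by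
    exact_mod_cast choose_id k r
  intro hpoly
  rw [fA_eq' α k r hr, fA_eq α k r hr]
  have hN : (0:ℝ) < ((4*k+r+1).choose (k+1) : ℝ)
      * ((8*(k:ℝ)+2*(r:ℝ)+2+α)/(8*(k:ℝ)+2*(r:ℝ)+2))^(2*k+r) * ((k:ℝ)+1) * (4*(k:ℝ)+(r:ℝ)+2) := by
    apply mul_pos (mul_pos (mul_pos hCh (pow_pos hbpos _)) (by positivity)) (by positivity)
  rw [div_le_iff₀ (div_pos hN hE), ← mul_div_assoc (64/5:ℝ), div_le_div_iff₀ hE' hE]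
  have hpow : ((8*(k:ℝ)+2*(r:ℝ)+10+α)/(8*(k:ℝ)+2*(r:ℝ)+10))^(2*k+r+2)
      ≤ ((8*(k:ℝ)+2*(r:ℝ)+2+α)/(8*(k:ℝ)+2*(r:ℝ)+2))^(2*k+r) * ((8*(k:ℝ)+2*(r:ℝ)+2+α)/(8*(k:ℝ)+2*(r:ℝ)+2))^2 := by
    rw [← pow_add]
    exact pow_le_pow_left₀ hb'nonneg hbb _
  have hQ3 : (0:ℝ) < (3*(k:ℝ)+(r:ℝ)+1)*((3*(k:ℝ)+(r:ℝ)+2)*(3*(k:ℝ)+(r:ℝ)+3)) := by positivity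
  have core : ((4*(k:ℝ)+(r:ℝ)+2)*((4*(k:ℝ)+(r:ℝ)+3)*((4*(k:ℝ)+(r:ℝ)+4)*(4*(k:ℝ)+(r:ℝ)+5))))
      * ((4*(k:ℝ)+(r:ℝ)+6) * ((4*(k:ℝ)+(r:ℝ)+2) * ((8*(k:ℝ)+2*(r:ℝ)+2-α)/(8*(k:ℝ)+2*(r:ℝ)+2)) - 2*(k:ℝ) - 2)
          * ((8*(k:ℝ)+2*(r:ℝ)+2+α)/(8*(k:ℝ)+2*(r:ℝ)+2))^2)
      ≤ 64/5 * ((k:ℝ)+1) * (4*(k:ℝ)+(r:ℝ)+2)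
          * ((4*(k:ℝ)+(r:ℝ)+6) * ((8*(k:ℝ)+2*(r:ℝ)+10-α)/(8*(k:ℝ)+2*(r:ℝ)+10)) - 2*(k:ℝ) - 4)
          * ((3*(k:ℝ)+(r:ℝ)+1)*((3*(k:ℝ)+(r:ℝ)+2)*(3*(k:ℝ)+(r:ℝ)+3))) := by
    calc ((4*(k:ℝ)+(r:ℝ)+2)*((4*(k:ℝ)+(r:ℝ)+3)*((4*(k:ℝ)+(r:ℝ)+4)*(4*(k:ℝ)+(r:ℝ)+5))))
        * ((4*(k:ℝ)+(r:ℝ)+6) * ((4*(k:ℝ)+(r:ℝ)+2) * ((8*(k:ℝ)+2*(r:ℝ)+2-α)/(8*(k:ℝ)+2*(r:ℝ)+2)) - 2*(k:ℝ) - 2)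
            * ((8*(k:ℝ)+2*(r:ℝ)+2+α)/(8*(k:ℝ)+2*(r:ℝ)+2))^2)
        = (5 * ((4*(k:ℝ)+(r:ℝ)+2)*((4*(k:ℝ)+(r:ℝ)+3)*((4*(k:ℝ)+(r:ℝ)+4)*(4*(k:ℝ)+(r:ℝ)+5))))
            * (8*(k:ℝ)+2*(r:ℝ)+2+α)^2 * (4*(k:ℝ)+(r:ℝ)+6)
            * ((4*(k:ℝ)+(r:ℝ)+2)*(8*(k:ℝ)+2*(r:ℝ)+2-α) - (2*(k:ℝ)+2)*(8*(k:ℝ)+2*(r:ℝ)+2))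
            * (8*(k:ℝ)+2*(r:ℝ)+10)) / (5 * (8*(k:ℝ)+2*(r:ℝ)+2)^3 * (8*(k:ℝ)+2*(r:ℝ)+10)) := by
          field_simp; ring
      _ ≤ (64 * ((3*(k:ℝ)+(r:ℝ)+1)*((3*(k:ℝ)+(r:ℝ)+2)*(3*(k:ℝ)+(r:ℝ)+3)))
            * (8*(k:ℝ)+2*(r:ℝ)+2)^3 * ((k:ℝ)+1) * (4*(k:ℝ)+(r:ℝ)+2)
            * ((4*(k:ℝ)+(r:ℝ)+6)*(8*(k:ℝ)+2*(r:ℝ)+10-α) - (2*(k:ℝ)+4)*(8*(k:ℝ)+2*(r:ℝ)+10)))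
          / (5 * (8*(k:ℝ)+2*(r:ℝ)+2)^3 * (8*(k:ℝ)+2*(r:ℝ)+10)) := by
          apply div_le_div_of_nonneg_right hpoly (by positivity)
      _ = 64/5 * ((k:ℝ)+1) * (4*(k:ℝ)+(r:ℝ)+2)
            * ((4*(k:ℝ)+(r:ℝ)+6) * ((8*(k:ℝ)+2*(r:ℝ)+10-α)/(8*(k:ℝ)+2*(r:ℝ)+10)) - 2*(k:ℝ) - 4)
            * ((3*(k:ℝ)+(r:ℝ)+1)*((3*(k:ℝ)+(r:ℝ)+2)*(3*(k:ℝ)+(r:ℝ)+3))) := by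
          field_simp; ring
  calc ((4*k+r+5).choose (k+2) : ℝ) * ((8*(k:ℝ)+2*(r:ℝ)+10+α)/(8*(k:ℝ)+2*(r:ℝ)+10))^(2*k+r+2)
        * ((k:ℝ)+2) * (4*(k:ℝ)+(r:ℝ)+6)
        * ((4*(k:ℝ)+(r:ℝ)+2) * ((8*(k:ℝ)+2*(r:ℝ)+2-α)/(8*(k:ℝ)+2*(r:ℝ)+2)) - 2*(k:ℝ) - 2)
      = (((4*k+r+5).choose (k+2) : ℝ) * (((k:ℝ)+2) * ((4*(k:ℝ)+(r:ℝ)+6)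
          * ((4*(k:ℝ)+(r:ℝ)+2) * ((8*(k:ℝ)+2*(r:ℝ)+2-α)/(8*(k:ℝ)+2*(r:ℝ)+2)) - 2*(k:ℝ) - 2))))
        * ((8*(k:ℝ)+2*(r:ℝ)+10+α)/(8*(k:ℝ)+2*(r:ℝ)+10))^(2*k+r+2) := by ring
    _ ≤ (((4*k+r+5).choose (k+2) : ℝ) * (((k:ℝ)+2) * ((4*(k:ℝ)+(r:ℝ)+6)
          * ((4*(k:ℝ)+(r:ℝ)+2) * ((8*(k:ℝ)+2*(r:ℝ)+2-α)/(8*(k:ℝ)+2*(r:ℝ)+2)) - 2*(k:ℝ) - 2))))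
        * (((8*(k:ℝ)+2*(r:ℝ)+2+α)/(8*(k:ℝ)+2*(r:ℝ)+2))^(2*k+r) * ((8*(k:ℝ)+2*(r:ℝ)+2+α)/(8*(k:ℝ)+2*(r:ℝ)+2))^2) := by
        apply mul_le_mul_of_nonneg_left hpow
        apply mul_nonneg hCh'
        apply mul_nonneg (by positivity)
        exact mul_nonneg (by positivity) hE.le
    _ ≤ 64/5 * (((4*k+r+1).choose (k+1) : ℝ)
          * ((8*(k:ℝ)+2*(r:ℝ)+2+α)/(8*(k:ℝ)+2*(r:ℝ)+2))^(2*k+r) * ((k:ℝ)+1) * (4*(k:ℝ)+(r:ℝ)+2))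
        * ((4*(k:ℝ)+(r:ℝ)+6) * ((8*(k:ℝ)+2*(r:ℝ)+10-α)/(8*(k:ℝ)+2*(r:ℝ)+10)) - 2*(k:ℝ) - 4) := by
        rw [← mul_le_mul_iff_of_pos_right hQ3]
        calc (((4*k+r+5).choose (k+2) : ℝ) * (((k:ℝ)+2) * ((4*(k:ℝ)+(r:ℝ)+6)
              * ((4*(k:ℝ)+(r:ℝ)+2) * ((8*(k:ℝ)+2*(r:ℝ)+2-α)/(8*(k:ℝ)+2*(r:ℝ)+2)) - 2*(k:ℝ) - 2))))
            * (((8*(k:ℝ)+2*(r:ℝ)+2+α)/(8*(k:ℝ)+2*(r:ℝ)+2))^(2*k+r) * ((8*(k:ℝ)+2*(r:ℝ)+2+α)/(8*(k:ℝ)+2*(r:ℝ)+2))^2)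
            * ((3*(k:ℝ)+(r:ℝ)+1)*((3*(k:ℝ)+(r:ℝ)+2)*(3*(k:ℝ)+(r:ℝ)+3)))
            = ((4*(k:ℝ)+(r:ℝ)+6) * ((4*(k:ℝ)+(r:ℝ)+2) * ((8*(k:ℝ)+2*(r:ℝ)+2-α)/(8*(k:ℝ)+2*(r:ℝ)+2)) - 2*(k:ℝ) - 2))
              * (((8*(k:ℝ)+2*(r:ℝ)+2+α)/(8*(k:ℝ)+2*(r:ℝ)+2))^(2*k+r) * ((8*(k:ℝ)+2*(r:ℝ)+2+α)/(8*(k:ℝ)+2*(r:ℝ)+2))^2)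
              * (((4*k+r+5).choose (k+2) : ℝ) * (((k:ℝ)+2) * ((3*(k:ℝ)+(r:ℝ)+1)*((3*(k:ℝ)+(r:ℝ)+2)*(3*(k:ℝ)+(r:ℝ)+3))))) := by
              ring
          _ = ((4*(k:ℝ)+(r:ℝ)+6) * ((4*(k:ℝ)+(r:ℝ)+2) * ((8*(k:ℝ)+2*(r:ℝ)+2-α)/(8*(k:ℝ)+2*(r:ℝ)+2)) - 2*(k:ℝ) - 2))
              * (((8*(k:ℝ)+2*(r:ℝ)+2+α)/(8*(k:ℝ)+2*(r:ℝ)+2))^(2*k+r) * ((8*(k:ℝ)+2*(r:ℝ)+2+α)/(8*(k:ℝ)+2*(r:ℝ)+2))^2)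
              * (((4*k+r+1).choose (k+1) : ℝ) * ((4*(k:ℝ)+(r:ℝ)+2)*((4*(k:ℝ)+(r:ℝ)+3)*((4*(k:ℝ)+(r:ℝ)+4)*(4*(k:ℝ)+(r:ℝ)+5))))) := by
              rw [hchR]
          _ = (((4*k+r+1).choose (k+1) : ℝ) * ((8*(k:ℝ)+2*(r:ℝ)+2+α)/(8*(k:ℝ)+2*(r:ℝ)+2))^(2*k+r))
              * (((4*(k:ℝ)+(r:ℝ)+2)*((4*(k:ℝ)+(r:ℝ)+3)*((4*(k:ℝ)+(r:ℝ)+4)*(4*(k:ℝ)+(r:ℝ)+5))))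
                * ((4*(k:ℝ)+(r:ℝ)+6) * ((4*(k:ℝ)+(r:ℝ)+2) * ((8*(k:ℝ)+2*(r:ℝ)+2-α)/(8*(k:ℝ)+2*(r:ℝ)+2)) - 2*(k:ℝ) - 2)
                    * ((8*(k:ℝ)+2*(r:ℝ)+2+α)/(8*(k:ℝ)+2*(r:ℝ)+2))^2)) := by ring
          _ ≤ (((4*k+r+1).choose (k+1) : ℝ) * ((8*(k:ℝ)+2*(r:ℝ)+2+α)/(8*(k:ℝ)+2*(r:ℝ)+2))^(2*k+r))
              * (64/5 * ((k:ℝ)+1) * (4*(k:ℝ)+(r:ℝ)+2)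
                  * ((4*(k:ℝ)+(r:ℝ)+6) * ((8*(k:ℝ)+2*(r:ℝ)+10-α)/(8*(k:ℝ)+2*(r:ℝ)+10)) - 2*(k:ℝ) - 4)
                  * ((3*(k:ℝ)+(r:ℝ)+1)*((3*(k:ℝ)+(r:ℝ)+2)*(3*(k:ℝ)+(r:ℝ)+3)))) := by
              apply mul_le_mul_of_nonneg_left core
              exact mul_nonneg hCh.le (by positivity)
          _ = 64/5 * (((4*k+r+1).choose (k+1) : ℝ)
                * ((8*(k:ℝ)+2*(r:ℝ)+2+α)/(8*(k:ℝ)+2*(r:ℝ)+2))^(2*k+r) * ((k:ℝ)+1) * (4*(k:ℝ)+(r:ℝ)+2))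
              * ((4*(k:ℝ)+(r:ℝ)+6) * ((8*(k:ℝ)+2*(r:ℝ)+10-α)/(8*(k:ℝ)+2*(r:ℝ)+10)) - 2*(k:ℝ) - 4)
              * ((3*(k:ℝ)+(r:ℝ)+1)*((3*(k:ℝ)+(r:ℝ)+2)*(3*(k:ℝ)+(r:ℝ)+3))) := by ring

/-- The induction step in the proof of Theorem 5:
`f_α(c+4)/f_α(c) ≤ (6/5)(32/3) < 16 = 2^{(c+4)−2}/2^{c−2}` for `α ∈ {1,2,3}` and `c ≥ 13`. -/
theorem stmt15 (α : ℝ) (hα : α = 1 ∨ α = 2 ∨ α = 3) (c : ℕ) (hc : 13 ≤ c) :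
    fA α (c + 4) / fA α c ≤ (6 / 5 : ℝ) * (32 / 3) ∧
    (6 / 5 : ℝ) * (32 / 3) < 16 ∧
    (16 : ℝ) = 2 ^ ((c + 4) - 2) / 2 ^ (c - 2) := by
  refine ⟨?_, by norm_num, ?_⟩
  · rw [show (6/5:ℝ)*(32/3) = 64/5 by norm_num]
    obtain ⟨k, r, hr, hk, rfl⟩ : ∃ k r, r ≤ 3 ∧ 2 ≤ k ∧ c = 4*k+r+2 :=
      ⟨(c-2)/4, (c-2)%4, by omega, by omega, by omega⟩
    rw [show 4*k+r+2+4 = 4*k+r+6 by omega]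
    interval_cases r
    · -- r = 0
      rcases hα with rfl | rfl | rfl
      · have hk3 : 3 ≤ k := by omega
        refine master 1 k 0 hk (by norm_num) (by norm_num) (by norm_num) ?_
        have hm : (0:ℝ) ≤ (k:ℝ) - 3 := by
          have : (3:ℝ) ≤ (k:ℝ) := by exact_mod_cast hk3
          linarith
        push_cast
        linarith [mul_nonneg (show (0:ℝ) ≤ 8821180251456 by norm_num) hm, mul_nonneg (show (0:ℝ) ≤ 11637763715328 by norm_num) (pow_nonneg hm 2), mul_nonneg (show (0:ℝ) ≤ 9135080232192 by norm_num) (pow_nonneg hm 3), mul_nonneg (show (0:ℝ) ≤ 4717035142144 by norm_num) (pow_nonneg hm 4), mul_nonneg (show (0:ℝ) ≤ 1671948322816 by norm_num) (pow_nonneg hm 5), mul_nonneg (show (0:ℝ) ≤ 411513708544 by norm_num) (pow_nonneg hm 6), mul_nonneg (show (0:ℝ) ≤ 69386305536 by norm_num) (pow_nonneg hm 7), mul_nonneg (show (0:ℝ) ≤ 7665090560 by norm_num) (pow_nonneg hm 8), mul_nonneg (show (0:ℝ) ≤ 500695040 by norm_num) (pow_nonneg hm 9), mul_nonneg (show (0:ℝ)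 ≤ 14680064 by norm_num) (pow_nonneg hm 10)]
      · have hk3 : 3 ≤ k := by omega
        refine master 2 k 0 hk (by norm_num) (by norm_num) (by norm_num) ?_
        have hm : (0:ℝ) ≤ (k:ℝ) - 3 := by
          have : (3:ℝ) ≤ (k:ℝ) := by exact_mod_cast hk3
          linarith
        push_cast
        linarith [mul_nonneg (show (0:ℝ) ≤ 6225642430464 by norm_num) hm, mul_nonneg (show (0:ℝ) ≤ 8521020999680 by norm_num) (pow_nonneg hm 2), mul_nonneg (show (0:ℝ) ≤ 6983202607104 by norm_num) (pow_nonneg hm 3), mul_nonneg (show (0:ℝ) ≤ 3773138706432 by norm_num) (pow_nonneg hm 4), mul_nonneg (show (0:ℝ) ≤ 1398640029696 by norm_num) (pow_nonneg hm 5), mul_nonneg (show (0:ℝ) ≤ 359198138368 by norm_num) (pow_nonneg hm 6), mul_nonneg (show (0:ℝ) ≤ 62995628032 by norm_num) (pow_nonneg hm 7), mul_nonneg (show (0:ℝ) ≤ 7212630016 by norm_num) (pow_nonneg hm 8), mul_nonneg (show (0:ℝ) ≤ 486539264 by norm_num) (pow_nonneg hm 9), mul_nonneg (show (0:ℝ)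 ≤ 14680064 by norm_num) (pow_nonneg hm 10)]
      · have hk3 : 3 ≤ k := by omega
        refine master 3 k 0 hk (by norm_num) (by norm_num) (by norm_num) ?_
        have hm : (0:ℝ) ≤ (k:ℝ) - 3 := by
          have : (3:ℝ) ≤ (k:ℝ) := by exact_mod_cast hk3
          linarith
        push_cast
        linarith [mul_nonneg (show (0:ℝ) ≤ 4097431595712 by norm_num) hm, mul_nonneg (show (0:ℝ) ≤ 5820428516352 by norm_num) (pow_nonneg hm 2), mul_nonneg (show (0:ℝ) ≤ 5042829212416 by norm_num) (pow_nonneg hm 3), mul_nonneg (show (0:ℝ) ≤ 2896346460160 by norm_num) (pow_nonneg hm 4), mul_nonneg (show (0:ℝ) ≤ 1138941351936 by norm_num) (pow_nonneg hm 5), mul_nonneg (show (0:ℝ) ≤ 308605673472 by norm_num) (pow_nonneg hm 6), mul_nonneg (show (0:ℝ) ≤ 56729468928 by norm_num) (pow_nonneg hm 7), mul_nonneg (show (0:ℝ) ≤ 6764101632 by norm_num) (pow_nonneg hm 8), mul_nonneg (show (0:ℝ) ≤ 472383488 by norm_num) (pow_nonneg hm 9), mul_nonneg (show (0:ℝ)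 ≤ 14680064 by norm_num) (pow_nonneg hm 10)]
    · -- r = 1
      rcases hα with rfl | rfl | rfl
      · have hk3 : 3 ≤ k := by omega
        refine master 1 k 1 hk (by norm_num) (by norm_num) (by norm_num) ?_
        have hm : (0:ℝ) ≤ (k:ℝ) - 3 := by
          have : (3:ℝ) ≤ (k:ℝ) := by exact_mod_cast hk3
          linarith
        push_cast
        linarith [mul_nonneg (show (0:ℝ) ≤ 16407901630560 by norm_num) hm, mul_nonneg (show (0:ℝ) ≤ 20537799043200 by norm_num) (pow_nonneg hm 2), mul_nonneg (show (0:ℝ) ≤ 15194709144448 by norm_num) (pow_nonneg hm 3), mul_nonneg (show (0:ℝ) ≤ 7356191708160 by norm_num) (pow_nonneg hm 4), mul_nonneg (show (0:ℝ) ≤ 2434573056000 by norm_num) (pow_nonneg hm 5), mul_nonneg (show (0:ℝ) ≤ 557751476224 by norm_num) (pow_nonneg hm 6), mul_nonneg (show (0:ℝ) ≤ 87333502976 by norm_num) (pow_nonneg hm 7), mul_nonneg (show (0:ℝ) ≤ 8944484352 by norm_num) (pow_nonneg hm 8), mul_nonneg (show (0:ℝ) ≤ 541065216 by norm_num) (pow_nonneg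 hm 9), mul_nonneg (show (0:ℝ) ≤ 14680064 by norm_num) (pow_nonneg hm 10)]
      · have hk3 : 3 ≤ k := by omega
        refine master 2 k 1 hk (by norm_num) (by norm_num) (by norm_num) ?_
        have hm : (0:ℝ) ≤ (k:ℝ) - 3 := by
          have : (3:ℝ) ≤ (k:ℝ) := by exact_mod_cast hk3
          linarith
        push_cast
        linarith [mul_nonneg (show (0:ℝ) ≤ 11364304489728 by norm_num) hm, mul_nonneg (show (0:ℝ) ≤ 15046784713728 by norm_num) (pow_nonneg hm 2), mul_nonneg (show (0:ℝ) ≤ 11735065771008 by norm_num) (pow_nonneg hm 3), mul_nonneg (show (0:ℝ) ≤ 5964519972864 by norm_num) (pow_nonneg hm 4), mul_nonneg (show (0:ℝ) ≤ 2063613091840 by norm_num) (pow_nonneg hm 5), mul_nonneg (show (0:ℝ) ≤ 492183355392 by norm_num) (pow_nonneg hm 6), mul_nonneg (show (0:ℝ) ≤ 79919120384 by norm_num) (pow_nonneg hm 7), mul_nonneg (show (0:ℝ) ≤ 8457551872 by norm_num) (pow_nonneg hm 8), mul_nonneg (show (0:ℝ) ≤ 526909440 by norm_num) (pow_nonneg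 hm 9), mul_nonneg (show (0:ℝ) ≤ 14680064 by norm_num) (pow_nonneg hm 10)]
      · have hk3 : 3 ≤ k := by omega
        refine master 3 k 1 hk (by norm_num) (by norm_num) (by norm_num) ?_
        have hm : (0:ℝ) ≤ (k:ℝ) - 3 := by
          have : (3:ℝ) ≤ (k:ℝ) := by exact_mod_cast hk3
          linarith
        push_cast
        linarith [mul_nonneg (show (0:ℝ) ≤ 7028332904736 by norm_num) hm, mul_nonneg (show (0:ℝ) ≤ 10149323185536 by norm_num) (pow_nonneg hm 2), mul_nonneg (show (0:ℝ) ≤ 8559631040128 by norm_num) (pow_nonneg hm 3), mul_nonneg (show (0:ℝ) ≤ 4657816439808 by norm_num) (pow_nonneg hm 4), mul_nonneg (show (0:ℝ) ≤ 1708894320640 by norm_num) (pow_nonneg hm 5), mul_nonneg (show (0:ℝ) ≤ 428553543680 by norm_num) (pow_nonneg hm 6), mul_nonneg (show (0:ℝ) ≤ 72636792832 by norm_num) (pow_nonneg hm 7), mul_nonneg (show (0:ℝ) ≤ 7974551552 by norm_num) (pow_nonneg hm 8), mul_nonneg (show (0:ℝ) ≤ 512753664 by norm_num) (pow_nonneg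 hm 9), mul_nonneg (show (0:ℝ) ≤ 14680064 by norm_num) (pow_nonneg hm 10)]
    · -- r = 2
      rcases hα with rfl | rfl | rfl
      · have hk3 : 3 ≤ k := by omega
        refine master 1 k 2 hk (by norm_num) (by norm_num) (by norm_num) ?_
        have hm : (0:ℝ) ≤ (k:ℝ) - 3 := by
          have : (3:ℝ) ≤ (k:ℝ) := by exact_mod_cast hk3
          linarith
        push_cast
        linarith [mul_nonneg (show (0:ℝ) ≤ 29051806167040 by norm_num) hm, mul_nonneg (show (0:ℝ) ≤ 34636792148480 by norm_num) (pow_nonneg hm 2), mul_nonneg (show (0:ℝ) ≤ 24263716344320 by norm_num) (pow_nonneg hm 3), mul_nonneg (show (0:ℝ) ≤ 11071136813056 by norm_num) (pow_nonneg hm 4), mul_nonneg (show (0:ℝ) ≤ 3440895694848 by norm_num) (pow_nonneg hm 5), mul_nonneg (show (0:ℝ) ≤ 738204082176 by norm_num) (pow_nonneg hm 6), mul_nonneg (show (0:ℝ) ≤ 108005949440 by norm_num) (pow_nonneg hm 7), mul_nonneg (show (0:ℝ) ≤ 10318249984 by norm_num) (pow_nonneg hm 8), mul_nonneg (show (0:ℝ)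 ≤ 581435392 by norm_num) (pow_nonneg hm 9), mul_nonneg (show (0:ℝ) ≤ 14680064 by norm_num) (pow_nonneg hm 10)]
      · have hk3 : 3 ≤ k := by omega
        refine master 2 k 2 hk (by norm_num) (by norm_num) (by norm_num) ?_
        have hm : (0:ℝ) ≤ (k:ℝ) - 3 := by
          have : (3:ℝ) ≤ (k:ℝ) := by exact_mod_cast hk3
          linarith
        push_cast
        linarith [mul_nonneg (show (0:ℝ) ≤ 19919655403520 by norm_num) hm, mul_nonneg (show (0:ℝ) ≤ 25481536798720 by norm_num) (pow_nonneg hm 2), mul_nonneg (show (0:ℝ) ≤ 18934464593920 by norm_num) (pow_nonneg hm 3), mul_nonneg (show (0:ℝ) ≤ 9085263519744 by norm_num) (pow_nonneg hm 4), mul_nonneg (show (0:ℝ) ≤ 2949444435968 by norm_num) (pow_nonneg hm 5), mul_nonneg (show (0:ℝ) ≤ 657408794624 by norm_num) (pow_nonneg hm 6), mul_nonneg (show (0:ℝ) ≤ 99494854656 by norm_num) (pow_nonneg hm 7), mul_nonneg (show (0:ℝ) ≤ 9796845568 by norm_num) (pow_nonneg hm 8), mul_nonneg (show (0:ℝ)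 ≤ 567279616 by norm_num) (pow_nonneg hm 9), mul_nonneg (show (0:ℝ) ≤ 14680064 by norm_num) (pow_nonneg hm 10)]
      · have hk3 : 3 ≤ k := by omega
        refine master 3 k 2 hk (by norm_num) (by norm_num) (by norm_num) ?_
        have hm : (0:ℝ) ≤ (k:ℝ) - 3 := by
          have : (3:ℝ) ≤ (k:ℝ) := by exact_mod_cast hk3
          linarith
        push_cast
        linarith [mul_nonneg (show (0:ℝ) ≤ 11833917972480 by norm_num) hm, mul_nonneg (show (0:ℝ) ≤ 17155960427520 by norm_num) (pow_nonneg hm 2), mul_nonneg (show (0:ℝ) ≤ 13980792330240 by norm_num) (pow_nonneg hm 3), mul_nonneg (show (0:ℝ) ≤ 7205558684672 by norm_num) (pow_nonneg hm 4), mul_nonneg (show (0:ℝ) ≤ 2477183838208 by norm_num) (pow_nonneg hm 5), mul_nonneg (show (0:ℝ) ≤ 578779635712 by norm_num) (pow_nonneg hm 6), mul_nonneg (show (0:ℝ) ≤ 91123351552 by norm_num) (pow_nonneg hm 7), mul_nonneg (show (0:ℝ) ≤ 9279373312 by norm_num) (pow_nonneg hm 8), mul_nonneg (show (0:ℝ)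 ≤ 553123840 by norm_num) (pow_nonneg hm 9), mul_nonneg (show (0:ℝ) ≤ 14680064 by norm_num) (pow_nonneg hm 10)]
    · -- r = 3
      rcases hα with rfl | rfl | rfl
      · refine master 1 k 3 hk (by norm_num) (by norm_num) (by norm_num) ?_
        have hm : (0:ℝ) ≤ (k:ℝ) - 2 := by
          have : (2:ℝ) ≤ (k:ℝ) := by exact_mod_cast hk
          linarith
        push_cast
        linarith [mul_nonneg (show (0:ℝ) ≤ 3268294603264 by norm_num) hm, mul_nonneg (show (0:ℝ) ≤ 5372446922560 by norm_num) (pow_nonneg hm 2), mul_nonneg (show (0:ℝ) ≤ 5002169076096 by norm_num) (pow_nonneg hm 3), mul_nonneg (show (0:ℝ) ≤ 2961268980736 by norm_num) (pow_nonneg hm 4), mul_nonneg (show (0:ℝ) ≤ 1174009571328 by norm_num) (pow_nonneg hm 5), mul_nonneg (show (0:ℝ) ≤ 317283311616 by norm_num) (pow_nonneg hm 6), mul_nonneg (show (0:ℝ) ≤ 57917210624 by norm_num) (pow_nonneg hm 7), mul_nonneg (show (0:ℝ) ≤ 6850740224 by norm_num) (pow_nonneg hm 8), mul_nonneg (show (0:ℝ)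 ≤ 475004928 by norm_num) (pow_nonneg hm 9), mul_nonneg (show (0:ℝ) ≤ 14680064 by norm_num) (pow_nonneg hm 10)]
      · refine master 2 k 3 hk (by norm_num) (by norm_num) (by norm_num) ?_
        have hm : (0:ℝ) ≤ (k:ℝ) - 2 := by
          have : (2:ℝ) ≤ (k:ℝ) := by exact_mod_cast hk
          linarith
        push_cast
        linarith [mul_nonneg (show (0:ℝ) ≤ 1409036374016 by norm_num) hm, mul_nonneg (show (0:ℝ) ≤ 3091563041280 by norm_num) (pow_nonneg hm 2), mul_nonneg (show (0:ℝ) ≤ 3379041129472 by norm_num) (pow_nonneg hm 3), mul_nonneg (show (0:ℝ) ≤ 2222483406848 by norm_num) (pow_nonneg hm 4), mul_nonneg (show (0:ℝ) ≤ 950868041728 by norm_num) (pow_nonneg hm 5), mul_nonneg (show (0:ℝ) ≤ 272544071680 by norm_num) (pow_nonneg hm 6), mul_nonneg (show (0:ℝ) ≤ 52173799424 by norm_num) (pow_nonneg hm 7), mul_nonneg (show (0:ℝ) ≤ 6422265856 by norm_num) (pow_nonneg hm 8), mul_nonneg (show (0:ℝ) ≤ 460849152 by norm_num) (pow_nonneg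 hm 9), mul_nonneg (show (0:ℝ) ≤ 14680064 by norm_num) (pow_nonneg hm 10)]
      · rcases Nat.lt_or_ge k 3 with hk2 | hk3
        · have hk2' : k = 2 := by omega
          subst hk2'
          rw [fA_eq' 3 2 3 (by norm_num), fA_eq 3 2 3 (by norm_num)]
          norm_num [Nat.choose]
        · refine master 3 k 3 hk (by norm_num) (by norm_num) (by norm_num) ?_
          have hm : (0:ℝ) ≤ (k:ℝ) - 3 := by
            have : (3:ℝ) ≤ (k:ℝ) := by exact_mod_cast hk3
            linarith
          push_cast
          linarith [mul_nonneg (show (0:ℝ) ≤ 19271381060352 by norm_num) hm, mul_nonneg (show (0:ℝ) ≤ 27973634311488 by norm_num) (pow_nonneg hm 2), mul_nonneg (show (0:ℝ) ≤ 22013053125760 by norm_num) (pow_nonneg hm 3), mul_nonneg (show (0:ℝ) ≤ 10774493142016 by norm_num) (pow_nonneg hm 4), mul_nonneg (show (0:ℝ) ≤ 3487704803328 by norm_num) (pow_nonneg hm 5), mul_nonneg (show (0:ℝ) ≤ 763655331840 by norm_num) (pow_nonneg hm 6), mul_nonneg (show (0:ℝ) ≤ 112370417664 by norm_num) (pow_nonneg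 hm 7), mul_nonneg (show (0:ℝ) ≤ 10678566912 by norm_num) (pow_nonneg hm 8), mul_nonneg (show (0:ℝ) ≤ 593494016 by norm_num) (pow_nonneg hm 9), mul_nonneg (show (0:ℝ) ≤ 14680064 by norm_num) (pow_nonneg hm 10)]
  · have h : (c+4)-2 = (c-2)+4 := by omega
    rw [h, pow_add]
    rw [mul_comm, mul_div_assoc, div_self (by positivity : (2:ℝ)^(c-2) ≠ 0)]
    norm_num
end
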